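/- arXiv:1011.1938 — 8 statements merged into one kernel-verified Lean document; each statement's English description precedes it below -/
import Mathlib

section
/- For 1/2 < λ₁ < λ₂ < g (where g = (√5−1)/2), every sequence i ∈ {0,1}^ℕ that is the unique expansion of its projection Π_{λ₂}(i) in base λ₂ is also the unique expansion of Π_{λ₁}(i) in base λ₁. That is, 𝒰_{λ₂} ⊆ 𝒰_{λ₁}. -/
noncomputable section

/-- A sequence with digits in {0,1}. -/
def binSeq (i : ℕ → ℕ) : Prop := ∀ n, i n ≤ 1

/-- The projection `Π_λ(i) = ∑_{n≥1} i_n λ^n`. -/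
def piL (l : ℝ) (i : ℕ → ℕ) : ℝ := ∑' n : ℕ, (i n : ℝ) * l ^ (n + 1)

/-- `i` belongs to `𝒰_λ`: it is the unique {0,1}-expansion of its projection. -/
def uniqueExpansion (l : ℝ) (i : ℕ → ℕ) : Prop :=
  binSeq i ∧ ∀ j : ℕ → ℕ, binSeq j → piL l j = piL l i → j = i

/-!
A sequence `i` is the unique expansion of `Π_λ(i)` exactly when no digit can be switched: whenever
`i n = 0` the tail `Π_λ(i_{n+1} i_{n+2} …)` is `< 1`, and whenever `i n = 1` the tail of the
complemented sequence is `< 1`. Indeed, for `λ ≥ 1/2` the values `Π_λ(j)` fill the whole interval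
`[0, λ/(1-λ)]` (greedy algorithm), so a tail value `≥ 1` could absorb the switch. Both tail values
increase with `λ`, so the conditions for `λ₂` imply those for `λ₁`.
-/

section Projection

variable {l : ℝ} {i : ℕ → ℕ}

lemma hasSum_pow_succ (hl0 : 0 ≤ l) (hl1 : l < 1) :
    HasSum (fun n : ℕ => l ^ (n + 1)) (l / (1 - l)) := by
  simpa only [pow_succ', div_eq_mul_inv] using (hasSum_geometric_of_lt_one hl0 hl1).mul_left l

lemma summable_piL (hl0 : 0 ≤ l) (hl1 : l < 1) (hi : binSeq i) :
    Summable fun n => (i n : ℝ) * l ^ (n + 1) :=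
  (hasSum_pow_succ hl0 hl1).summable.of_nonneg_of_le (fun n => by positivity) fun n =>
    mul_le_of_le_one_left (by positivity) (by exact_mod_cast hi n)

lemma piL_nonneg (hl0 : 0 ≤ l) (i : ℕ → ℕ) : 0 ≤ piL l i :=
  tsum_nonneg fun n => by positivity

lemma piL_one_sub (hl0 : 0 ≤ l) (hl1 : l < 1) (hi : binSeq i) :
    piL l (fun n => 1 - i n) = l / (1 - l) - piL l i := by
  refine .trans (tsum_congr fun n => ?_)
    ((hasSum_pow_succ hl0 hl1).sub (summable_piL hl0 hl1 hi).hasSum).tsum_eq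
  rw [Nat.cast_sub (hi n)]
  push_cast
  ring

lemma piL_le (hl0 : 0 ≤ l) (hl1 : l < 1) (hi : binSeq i) : piL l i ≤ l / (1 - l) := by
  linarith [piL_one_sub hl0 hl1 hi, piL_nonneg hl0 fun n => 1 - i n]

lemma piL_le_piL {l₁ l₂ : ℝ} (hl₁ : 0 ≤ l₁) (hl : l₁ ≤ l₂) (hl₂ : l₂ < 1) (hi : binSeq i) :
    piL l₁ i ≤ piL l₂ i :=
  (summable_piL hl₁ (hl.trans_lt hl₂) hi).tsum_le_tsum
    (fun n => mul_le_mul_of_nonneg_left (pow_le_pow_left₀ hl₁ hl _) (by positivity))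
    (summable_piL (hl₁.trans hl) hl₂ hi)

lemma piL_eq_mul_add_tail (hl0 : 0 ≤ l) (hl1 : l < 1) (hi : binSeq i) :
    piL l i = l * (i 0 + piL l fun k => i (k + 1)) := by
  rw [piL, (summable_piL hl0 hl1 hi).tsum_eq_zero_add, piL, mul_add, ← tsum_mul_left]
  congr 1
  · ring
  · exact tsum_congr fun k => by ring

end Projection

section Greedy

variable {l x : ℝ}

/-- Remainders of the greedy algorithm: `x = ∑_{m<n} d_m λ^{m+1} + λ^n r_n`. -/
def greedyRem (l x : ℝ) : ℕ → ℝ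
  | 0 => x
  | n + 1 => greedyRem l x n / l - if l ≤ greedyRem l x n then 1 else 0

def greedyDigit (l x : ℝ) (n : ℕ) : ℕ := if l ≤ greedyRem l x n then 1 else 0

lemma greedyRem_mem (hl : 1 / 2 ≤ l) (hl1 : l < 1) (hx : x ∈ Set.Icc 0 (l / (1 - l))) (n : ℕ) :
    greedyRem l x n ∈ Set.Icc 0 (l / (1 - l)) := by
  have hl0 : 0 < l := by linarith
  have h1l : 0 < 1 - l := by linarith
  induction n with
  | zero => exact hx
  | succ n ih =>
    obtain ⟨hr0, hr1⟩ := ih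
    have hdiv : greedyRem l x n / l ≤ 1 / (1 - l) := by
      rw [div_le_div_iff₀ hl0 h1l]; rw [le_div_iff₀ h1l] at hr1; linarith
    -- a remainder below `λ` is scaled into `[0, 1)`, which stays in range since `λ ≥ 1/2`
    have hone : 1 ≤ l / (1 - l) := by rw [le_div_iff₀ h1l]; linarith
    simp only [greedyRem, Set.mem_Icc]
    split_ifs with hr
    · refine ⟨by rw [sub_nonneg, le_div_iff₀ hl0]; linarith, ?_⟩
      have : 1 / (1 - l) - 1 = l / (1 - l) := by field_simp; ring
      linarith
    · rw [sub_zero]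
      refine ⟨div_nonneg hr0 hl0.le, ?_⟩
      linarith [(div_lt_one hl0).mpr (not_le.mp hr)]

lemma greedyRem_eq (hl : l ≠ 0) (n : ℕ) :
    greedyRem l x n = l * (greedyDigit l x n + greedyRem l x (n + 1)) := by
  simp only [greedyRem, greedyDigit]
  split_ifs <;> field_simp <;> ring

lemma sum_greedyDigit_add (hl : l ≠ 0) (N : ℕ) :
    ∑ m ∈ Finset.range N, (greedyDigit l x m : ℝ) * l ^ (m + 1) + l ^ N * greedyRem l x N = x := by
  induction N with
  | zero => simp [greedyRem]
  | succ N ih =>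
    conv_rhs => rw [← ih, greedyRem_eq hl N]
    rw [Finset.sum_range_succ]
    ring

lemma hasSum_greedyDigit (hl : 1 / 2 ≤ l) (hl1 : l < 1) (hx : x ∈ Set.Icc 0 (l / (1 - l))) :
    HasSum (fun n => (greedyDigit l x n : ℝ) * l ^ (n + 1)) x := by
  have hl0 : 0 < l := by linarith
  have hrem : Filter.Tendsto (fun N => l ^ N * greedyRem l x N) Filter.atTop (nhds 0) := by
    refine squeeze_zero (fun N => mul_nonneg (by positivity) (greedyRem_mem hl hl1 hx N).1)
      (fun N => mul_le_mul_of_nonneg_left (greedyRem_mem hl hl1 hx N).2 (by positivity)) ?_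
    simpa using (tendsto_pow_atTop_nhds_zero_of_lt_one hl0.le hl1).mul_const (l / (1 - l))
  rw [hasSum_iff_tendsto_nat_of_nonneg fun n => by positivity]
  have hlim : Filter.Tendsto (fun N => x - l ^ N * greedyRem l x N) Filter.atTop (nhds x) := by
    simpa using tendsto_const_nhds.sub hrem
  refine hlim.congr fun N => ?_
  linarith [sum_greedyDigit_add (x := x) hl0.ne' N]

lemma exists_piL_eq (hl : 1 / 2 ≤ l) (hl1 : l < 1) (hx : x ∈ Set.Icc 0 (l / (1 - l))) :
    ∃ j, binSeq j ∧ piL l j = x :=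
  ⟨greedyDigit l x, fun n => by unfold greedyDigit; split <;> omega,
    (hasSum_greedyDigit hl hl1 hx).tsum_eq⟩

end Greedy

section Characterization

variable {l : ℝ} {i j : ℕ → ℕ}

lemma binSeq_cons {a : ℕ} (ha : a ≤ 1) (hj : binSeq j) : binSeq (Stream'.cons a j) := by
  rintro (_ | n)
  exacts [ha, hj n]

lemma piL_cons (hl0 : 0 ≤ l) (hl1 : l < 1) {a : ℕ} (ha : a ≤ 1) (hj : binSeq j) :
    piL l (Stream'.cons a j) = l * (a + piL l j) :=
  piL_eq_mul_add_tail hl0 hl1 (binSeq_cons ha hj)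

lemma uniqueExpansion.tail (hl0 : 0 ≤ l) (hl1 : l < 1) (hi : uniqueExpansion l i) :
    uniqueExpansion l fun k => i (k + 1) := by
  refine ⟨fun k => hi.1 _, fun j hj h => funext fun k => ?_⟩
  have hcons := hi.2 (Stream'.cons (i 0) j) (binSeq_cons (hi.1 0) hj) <| by
    rw [piL_cons hl0 hl1 (hi.1 0) hj, h, ← piL_eq_mul_add_tail hl0 hl1 hi.1]
  exact congrFun hcons (k + 1)

lemma uniqueExpansion.one_sub (hl0 : 0 ≤ l) (hl1 : l < 1) (hi : uniqueExpansion l i) :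
    uniqueExpansion l fun n => 1 - i n := by
  refine ⟨fun n => Nat.sub_le _ _, fun j hj h => funext fun n => ?_⟩
  have hcompl := hi.2 (fun n => 1 - j n) (fun n => Nat.sub_le _ _) <| by
    rw [piL_one_sub hl0 hl1 hj, h, piL_one_sub hl0 hl1 hi.1, sub_sub_cancel]
  have := congrFun hcompl n
  have := hj n
  omega

def FirstDigitForced (l : ℝ) (i : ℕ → ℕ) : Prop :=
  (i 0 = 0 → piL l (fun k => i (k + 1)) < 1) ∧ (i 0 = 1 → piL l (fun k => 1 - i (k + 1)) < 1)

lemma piL_tail_lt_one (hl : 1 / 2 ≤ l) (hl1 : l < 1) (hi : uniqueExpansion l i) (h0 : i 0 = 0) :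
    piL l (fun k => i (k + 1)) < 1 := by
  have hl0 : 0 ≤ l := by linarith
  set T := piL l fun k => i (k + 1)
  by_contra! hT
  -- switching the first digit to `1` leaves the value `T - 1` for the tail
  obtain ⟨j, hj, hjT⟩ := exists_piL_eq hl hl1 (x := T - 1)
    ⟨by linarith, by linarith [piL_le hl0 hl1 fun k => hi.1 (k + 1)]⟩
  have := hi.2 (Stream'.cons 1 j) (binSeq_cons le_rfl hj) <| by
    rw [piL_cons hl0 hl1 le_rfl hj, hjT, piL_eq_mul_add_tail hl0 hl1 hi.1, h0]
    ring
  exact one_ne_zero ((congrFun this 0).trans h0)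

lemma firstDigitForced_of_uniqueExpansion (hl : 1 / 2 ≤ l) (hl1 : l < 1)
    (hi : uniqueExpansion l i) : FirstDigitForced l i :=
  have hl0 : 0 ≤ l := by linarith
  ⟨piL_tail_lt_one hl hl1 hi, fun h1 =>
    piL_tail_lt_one hl hl1 (hi.one_sub hl0 hl1) (by simp [h1])⟩

lemma forall_firstDigitForced_of_uniqueExpansion (hl : 1 / 2 ≤ l) (hl1 : l < 1)
    (hi : uniqueExpansion l i) (n : ℕ) : FirstDigitForced l fun k => i (n + k) := by
  refine firstDigitForced_of_uniqueExpansion hl hl1 ?_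
  induction n with
  | zero => simpa using hi
  | succ n ih =>
    convert ih.tail (by linarith) hl1 using 3
    ring

lemma FirstDigitForced.anti {l₁ l₂ : ℝ} (hl₁ : 0 ≤ l₁) (hl : l₁ ≤ l₂) (hl₂ : l₂ < 1)
    (hi : binSeq i) (h : FirstDigitForced l₂ i) : FirstDigitForced l₁ i :=
  ⟨fun h0 => (piL_le_piL hl₁ hl hl₂ fun k => hi (k + 1)).trans_lt (h.1 h0),
    fun h1 => (piL_le_piL hl₁ hl hl₂ fun _ => Nat.sub_le _ _).trans_lt (h.2 h1)⟩

lemma FirstDigitForced.head_eq (hl0 : 0 < l) (hl1 : l < 1) (hi : binSeq i) (hj : binSeq j)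
    (hc : FirstDigitForced l i) (h : piL l j = piL l i) : j 0 = i 0 := by
  rw [piL_eq_mul_add_tail hl0.le hl1 hi, piL_eq_mul_add_tail hl0.le hl1 hj] at h
  have hsum := mul_left_cancel₀ hl0.ne' h
  have hTj := piL_le hl0.le hl1 fun k => hj (k + 1)
  have hTj' := piL_nonneg hl0.le fun k => j (k + 1)
  have hcompl := piL_one_sub hl0.le hl1 fun k => hi (k + 1)
  rcases Nat.le_one_iff_eq_zero_or_eq_one.mp (hi 0) with hi0 | hi0 <;>
    rcases Nat.le_one_iff_eq_zero_or_eq_one.mp (hj 0) with hj0 | hj0 <;>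
    simp only [hi0, hj0, Nat.cast_zero, Nat.cast_one] at hsum ⊢
  · linarith [hc.1 hi0]
  · linarith [hc.2 hi0]

lemma piL_tail_eq (hl0 : 0 < l) (hl1 : l < 1) (hi : binSeq i) (hj : binSeq j)
    (h0 : j 0 = i 0) (h : piL l j = piL l i) :
    piL l (fun k => j (k + 1)) = piL l fun k => i (k + 1) := by
  rw [piL_eq_mul_add_tail hl0.le hl1 hi, piL_eq_mul_add_tail hl0.le hl1 hj, h0] at h
  simpa using mul_left_cancel₀ hl0.ne' h

lemma uniqueExpansion_of_forall_firstDigitForced (hl0 : 0 < l) (hl1 : l < 1) (hi : binSeq i)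
    (hc : ∀ n, FirstDigitForced l fun k => i (n + k)) : uniqueExpansion l i := by
  refine ⟨hi, fun j hj h => ?_⟩
  have hi' (n : ℕ) : binSeq fun k => i (n + k) := fun k => hi _
  have hj' (n : ℕ) : binSeq fun k => j (n + k) := fun k => hj _
  have hdrop : ∀ n, piL l (fun k => j (n + k)) = piL l fun k => i (n + k) := by
    intro n
    induction n with
    | zero => simpa using h
    | succ n ih =>
      have := piL_tail_eq hl0 hl1 (hi' n) (hj' n) ((hc n).head_eq hl0 hl1 (hi' n) (hj' n) ih) ih
      simpa only [add_assoc, add_comm 1] using this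
  funext n
  simpa using (hc n).head_eq hl0 hl1 (hi' n) (hj' n) (hdrop n)

end Characterization

theorem stmt0 (l₁ l₂ : ℝ) (h₁ : 1 / 2 < l₁) (h₂ : l₁ < l₂)
    (h₃ : l₂ < (Real.sqrt 5 - 1) / 2) (i : ℕ → ℕ)
    (hi : uniqueExpansion l₂ i) : uniqueExpansion l₁ i := by
  have hl₂ : l₂ < 1 := by
    nlinarith [Real.sq_sqrt (show (0 : ℝ) ≤ 5 by norm_num), Real.sqrt_nonneg 5]
  exact uniqueExpansion_of_forall_firstDigitForced (by linarith) (by linarith) hi.1 fun n =>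
    (forall_firstDigitForced_of_uniqueExpansion (by linarith) hl₂ hi n).anti
      (by linarith) h₂.le hl₂ fun k => hi.1 _
end
end

section
/- Let λ = β₁^{-1} where β₁ > 1 is the positive solution of 1 = x^{-1} + Σ_{n≥1} x^{-2n}. If i ∈ {0,1}^ℕ is an arbitrary concatenation of words from the set 𝒫 = {1(10)^k 0 : k ≥ 0} ∪ {0(01)^k 1 : k ≥ 0}, then for all n ≥ 1, |ℓ₀(i,n) − n/2| ≤ 1, where ℓ₀(i,n) = #{k ∈ {1,…,n} : i_k = 0}. In particular the frequency of 0's in i equals 1/2. -/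
/-!
Track the excess `2 ℓ₀ - length` of a word. Along `1(10)^k 0` the running excess stays in
`[-2, 0]`: the leading `1` lowers it by one, each pair `10` moves it by at most one and returns
it, and the final `0` restores it to `0`; symmetrically it stays in `[0, 2]` along `0(01)^k 1`.
So in a concatenation of such words the excess is back to `0` at every cut point and lies in
`[-2, 2]` everywhere, i.e. `|ℓ₀(i,n) - n/2| ≤ 1`, and dividing by `n` gives frequency `1/2`.
-/

noncomputable section

/-- The word `1(10)^k 0`. -/
def wordA (k : ℕ) : List ℕ := 1 :: (List.replicate k [1, 0]).flatten ++ [0]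

/-- The word `0(01)^k 1` (the flip of `wordA k`). -/
def wordB (k : ℕ) : List ℕ := 0 :: (List.replicate k [0, 1]).flatten ++ [1]

/-- The collection 𝒫 of words. -/
def wordsP : Set (List ℕ) := {w | ∃ k : ℕ, w = wordA k ∨ w = wordB k}

/-- `i` is an (infinite) concatenation of words from 𝒫: there are cut points
`0 = t 0 < t 1 < ⋯` such that each block of `i` between consecutive cut points
is a word of 𝒫. -/
def isConcatOfP (i : ℕ → ℕ) : Prop :=
  ∃ t : ℕ → ℕ, t 0 = 0 ∧ StrictMono t ∧
    ∀ m : ℕ, (List.ofFn fun a : Fin (t (m + 1) - t m) => i (t m + a)) ∈ wordsP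

/-- `ℓ₀(i,n)`: the number of zeros among the first `n` digits of `i`. -/
def countZeros (i : ℕ → ℕ) (n : ℕ) : ℕ := ((Finset.range n).filter fun m => i m = 0).card

open Filter Topology Set

def zeroExcess (w : List ℕ) : ℤ := 2 * w.count 0 - w.length

@[simp] lemma zeroExcess_nil : zeroExcess [] = 0 := by simp [zeroExcess]

@[simp] lemma zeroExcess_singleton_zero : zeroExcess [0] = 1 := by simp [zeroExcess]

@[simp] lemma zeroExcess_singleton_one : zeroExcess [1] = -1 := by simp [zeroExcess]

@[simp] lemma zeroExcess_append (u v : List ℕ) :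
    zeroExcess (u ++ v) = zeroExcess u + zeroExcess v := by
  simp only [zeroExcess, List.count_append, List.length_append]; push_cast; ring

lemma zeroExcess_cons (a : ℕ) (w : List ℕ) :
    zeroExcess (a :: w) = zeroExcess [a] + zeroExcess w :=
  zeroExcess_append [a] w

lemma zeroExcess_flatten (ws : List (List ℕ)) :
    zeroExcess ws.flatten = (ws.map zeroExcess).sum := by
  induction ws with
  | nil => simp
  | cons w ws ih => simp [ih]

lemma zeroExcess_take_append (u v : List ℕ) (j : ℕ) :
    zeroExcess ((u ++ v).take j) = zeroExcess (u.take j) + zeroExcess (v.take (j - u.length)) := by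
  rw [List.take_append, zeroExcess_append]

def PrefixExcessIn (s : Set ℤ) (w : List ℕ) : Prop := ∀ j, zeroExcess (w.take j) ∈ s

lemma PrefixExcessIn.append {s : Set ℤ} {u v : List ℕ} (hu : PrefixExcessIn s u)
    (hu0 : zeroExcess u = 0) (hv : PrefixExcessIn s v) : PrefixExcessIn s (u ++ v) := by
  intro j
  rw [zeroExcess_take_append]
  rcases le_total j u.length with hj | hj
  · simpa [Nat.sub_eq_zero_of_le hj] using hu j
  · simpa [List.take_of_length_le hj, hu0] using hv (j - u.length)

lemma PrefixExcessIn.flatten {s : Set ℤ} (hs : 0 ∈ s) {ws : List (List ℕ)}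
    (h : ∀ w ∈ ws, zeroExcess w = 0 ∧ PrefixExcessIn s w) : PrefixExcessIn s ws.flatten := by
  induction ws with
  | nil => intro j; simpa using hs
  | cons w ws ih =>
    obtain ⟨hw0, hw⟩ := h w (by simp)
    exact hw.append hw0 (ih fun w hw => h w (by simp [hw]))

lemma PrefixExcessIn.of_prefix {s : Set ℤ} {u w : List ℕ} (hw : PrefixExcessIn s w)
    (huw : u <+: w) : zeroExcess u ∈ s := by
  rw [List.prefix_iff_eq_take.mp huw]; exact hw _

lemma zeroExcess_flatten_replicate {u : List ℕ} (hu : zeroExcess u = 0) (k : ℕ) :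
    zeroExcess (List.replicate k u).flatten = 0 := by
  simp [zeroExcess_flatten, hu]

lemma PrefixExcessIn.flatten_replicate {s : Set ℤ} {u : List ℕ} (hu0 : zeroExcess u = 0)
    (hu : PrefixExcessIn s u) (k : ℕ) : PrefixExcessIn s (List.replicate k u).flatten :=
  PrefixExcessIn.flatten (by simpa using hu 0) fun w hw => by
    obtain ⟨-, rfl⟩ := List.mem_replicate.mp hw
    exact ⟨hu0, hu⟩

lemma zeroExcess_take_singleton (a : ℕ) (j : ℕ) :
    zeroExcess ([a].take j) = 0 ∨ zeroExcess ([a].take j) = zeroExcess [a] := by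
  rcases j with _ | j <;> simp

lemma zeroExcess_wordA (k : ℕ) : zeroExcess (wordA k) = 0 := by
  rw [wordA, zeroExcess_append, zeroExcess_cons,
    zeroExcess_flatten_replicate (by simp [zeroExcess])]
  simp

lemma zeroExcess_wordB (k : ℕ) : zeroExcess (wordB k) = 0 := by
  rw [wordB, zeroExcess_append, zeroExcess_cons,
    zeroExcess_flatten_replicate (by simp [zeroExcess])]
  simp

lemma prefixExcessIn_wordA (k : ℕ) : PrefixExcessIn (Icc (-2) 0) (wordA k) := by
  have hF : PrefixExcessIn (Icc (-1) 0) (List.replicate k [1, 0]).flatten :=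
    .flatten_replicate (by simp [zeroExcess])
      (fun j => by rcases j with _ | _ | j <;> simp [zeroExcess]) k
  rintro (_ | j)
  · simp
  · rw [wordA, List.cons_append, List.take_succ_cons, zeroExcess_cons, zeroExcess_take_append]
    have h0 := zeroExcess_take_singleton 0 (j - (List.replicate k [1, 0]).flatten.length)
    have := hF j
    simp only [mem_Icc, zeroExcess_singleton_one, zeroExcess_singleton_zero] at *
    omega

lemma prefixExcessIn_wordB (k : ℕ) : PrefixExcessIn (Icc 0 2) (wordB k) := by
  have hF : PrefixExcessIn (Icc 0 1) (List.replicate k [0, 1]).flatten :=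
    .flatten_replicate (by simp [zeroExcess])
      (fun j => by rcases j with _ | _ | j <;> simp [zeroExcess]) k
  rintro (_ | j)
  · simp
  · rw [wordB, List.cons_append, List.take_succ_cons, zeroExcess_cons, zeroExcess_take_append]
    have h1 := zeroExcess_take_singleton 1 (j - (List.replicate k [0, 1]).flatten.length)
    have := hF j
    simp only [mem_Icc, zeroExcess_singleton_one, zeroExcess_singleton_zero] at *
    omega

lemma zeroExcess_eq_zero_and_prefixExcessIn_of_mem_wordsP {w : List ℕ} (hw : w ∈ wordsP) :
    zeroExcess w = 0 ∧ PrefixExcessIn (Icc (-2) 2) w := by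
  obtain ⟨k, rfl | rfl⟩ := hw
  · exact ⟨zeroExcess_wordA k,
      fun j => Icc_subset_Icc_right (by norm_num) (prefixExcessIn_wordA k j)⟩
  · exact ⟨zeroExcess_wordB k,
      fun j => Icc_subset_Icc_left (by norm_num) (prefixExcessIn_wordB k j)⟩

lemma countZeros_eq_count (i : ℕ → ℕ) (n : ℕ) :
    countZeros i n = ((List.range n).map i).count 0 := by
  induction n with
  | zero => simp [countZeros]
  | succ n ih =>
    rw [List.range_succ, List.map_append, List.count_append, ← ih]
    simp only [countZeros, Finset.range_add_one, Finset.filter_insert]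
    split_ifs with h <;> simp [h]

lemma map_range_add {α : Type*} (f : ℕ → α) (s L : ℕ) :
    (List.range (s + L)).map f = (List.range s).map f ++ List.ofFn fun a : Fin L => f (s + a) := by
  rw [List.range_add, List.map_append, List.map_map]
  congr 1
  apply List.ext_getElem <;> simp

lemma isConcatOfP.exists_prefix_flatten {i : ℕ → ℕ} (hi : isConcatOfP i) (n : ℕ) :
    ∃ ws : List (List ℕ), (∀ w ∈ ws, w ∈ wordsP) ∧
      (List.range n).map i <+: ws.flatten := by
  obtain ⟨t, ht0, htm, htP⟩ := hi
  set block := fun m => List.ofFn fun a : Fin (t (m + 1) - t m) => i (t m + a)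
  have hflat : ∀ m, (List.range (t m)).map i = ((List.range m).map block).flatten := by
    intro m
    induction m with
    | zero => simp [ht0]
    | succ m ih =>
      rw [List.range_succ, List.map_append, List.flatten_append, ← ih]
      simp only [List.map_cons, List.map_nil, List.flatten_cons, List.flatten_nil,
        List.append_nil, block]
      rw [← map_range_add, Nat.add_sub_cancel' (htm (Nat.lt_succ_self m)).le]
  refine ⟨(List.range n).map block, by simpa using fun m _ => htP m, ?_⟩
  rw [← hflat, ← Nat.add_sub_cancel' (htm.id_le n), map_range_add]
  exact List.prefix_append _ _

lemma abs_two_mul_countZeros_sub_le {i : ℕ → ℕ} (hi : isConcatOfP i) (n : ℕ) :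
    |2 * (countZeros i n : ℤ) - n| ≤ 2 := by
  obtain ⟨ws, hws, hpre⟩ := hi.exists_prefix_flatten n
  have hflat : PrefixExcessIn (Icc (-2) 2) ws.flatten :=
    .flatten (by norm_num) fun w hw =>
      zeroExcess_eq_zero_and_prefixExcessIn_of_mem_wordsP (hws w hw)
  have := hflat.of_prefix hpre
  rw [zeroExcess, List.length_map, List.length_range, ← countZeros_eq_count] at this
  exact abs_le.mpr this

lemma tendsto_div_natCast_of_abs_sub_mul_le {a : ℕ → ℝ} {c C : ℝ}
    (h : ∀ n, |a n - c * n| ≤ C) : Tendsto (fun n : ℕ => a n / n) atTop (𝓝 c) := by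
  rw [tendsto_iff_dist_tendsto_zero]
  refine squeeze_zero' (.of_forall fun n => dist_nonneg) ?_
    (tendsto_const_div_atTop_nhds_zero_nat C)
  filter_upwards [eventually_gt_atTop 0] with n hn
  have hn' : (0 : ℝ) < n := Nat.cast_pos.mpr hn
  rw [Real.dist_eq, show a n / n - c = (a n - c * n) / n by field_simp, abs_div,
    Nat.abs_cast]
  exact div_le_div_of_nonneg_right (h n) hn'.le

theorem stmt2_general (i : ℕ → ℕ) (hi : isConcatOfP i) :
    (∀ n : ℕ, 1 ≤ n → |(countZeros i n : ℝ) - n / 2| ≤ 1) ∧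
    Filter.Tendsto (fun n : ℕ => (countZeros i n : ℝ) / n) Filter.atTop (nhds (1 / 2)) := by
  have hbound (n : ℕ) : |(countZeros i n : ℝ) - n / 2| ≤ 1 := by
    have h : |2 * (countZeros i n : ℝ) - n| ≤ 2 := by
      exact_mod_cast abs_two_mul_countZeros_sub_le hi n
    rw [show (countZeros i n : ℝ) - n / 2 = (2 * countZeros i n - n) / 2 by ring, abs_div,
      abs_two]
    linarith
  refine ⟨fun n _ => hbound n, tendsto_div_natCast_of_abs_sub_mul_le (C := 1) fun n => ?_⟩
  simpa [div_eq_inv_mul] using hbound n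

theorem stmt2 (β₁ : ℝ) (hβ : 1 < β₁)
    (hroot : 1 = β₁⁻¹ + ∑' n : ℕ, (β₁ ^ (2 * (n + 1)))⁻¹)
    (l : ℝ) (hl : l = β₁⁻¹)
    (i : ℕ → ℕ) (hi : isConcatOfP i) :
    (∀ n : ℕ, 1 ≤ n → |(countZeros i n : ℝ) - n / 2| ≤ 1) ∧
    Filter.Tendsto (fun n : ℕ => (countZeros i n : ℝ) / n) Filter.atTop (nhds (1 / 2)) :=
  stmt2_general i hi
end
end

section
/- Fix k ≥ 2 and let Σ ⊆ {0,1}^ℕ be the set of sequences obtained as infinite concatenations of the two words u₀ = 1(10)^{k+1} and u₁ = 0(01)^{k+1} (each of length 2k+3). Then for every r in the closed interval [(k+1)/(2k+3), (k+2)/(2k+3)] there exists i ∈ Σ with freq₀(i) = r, and there also exists i ∈ Σ for which freq₀(i) does not exist. -/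
/-!
Write `L = 2k+3` and let the `m`-th block be `u₁` when `j m = 0` and `u₀` otherwise. Since
`u₀` has `k+1` zeros and `u₁` has `k+2`, the prefix of length `L N` contains
`(k+1) N + #{m < N | j m = 0}` zeros, and by monotonicity of the counting function the
frequency may be read along multiples of `L`. Hence the block sequence has zero-frequency `r`
iff `j` has zero-frequency `L r - (k+1)`, an affine bijection `[0, 1] → [(k+1)/L, (k+2)/L]`.
Every `t ∈ [0, 1]` is a frequency (zeros at the jumps of `⌊t m⌋`), and `m ↦ ⌊log₂ m⌋ mod 2`
has none: along `N = 2^J` the zero counts `c_J` satisfy `2 c_{J+1}/2^{J+1} - c_J/2^J = 1` for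
even `J` and `= 0` for odd `J`, which is incompatible with convergence.
-/

noncomputable section

/-- The word `u₀ = 1(10)^{k+1}`, of length `2k+3`. -/
def wordU0 (k : ℕ) : List ℕ := 1 :: (List.replicate (k + 1) [1, 0]).flatten

/-- The word `u₁ = 0(01)^{k+1}`, of length `2k+3`. -/
def wordU1 (k : ℕ) : List ℕ := 0 :: (List.replicate (k + 1) [0, 1]).flatten

/-- The set Σ of infinite concatenations of the blocks `u₀`, `u₁`: for some choice
function `a`, the `m`-th block of `i` (of length `2k+3`) is `u₀` or `u₁` according to `a m`. -/
def sigmaSet (k : ℕ) : Set (ℕ → ℕ) :=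
  {i | ∃ a : ℕ → Bool, ∀ n : ℕ,
    i n = (if a (n / (2 * k + 3)) then wordU0 k else wordU1 k).getD (n % (2 * k + 3)) 0}

/-- `freq₀(i) = r`. -/
def hasFreqZero (i : ℕ → ℕ) (r : ℝ) : Prop :=
  Filter.Tendsto (fun n : ℕ => (countZeros i n : ℝ) / n) Filter.atTop (nhds r)

open Filter Topology

theorem countZeros_eq_count_s3 (i : ℕ → ℕ) (n : ℕ) :
    countZeros i n = Nat.count (fun m => i m = 0) n :=
  (Nat.count_eq_card_filter_range _ n).symm

theorem countZeros_monotone (i : ℕ → ℕ) : Monotone (countZeros i) := by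
  simpa only [← funext (countZeros_eq_count_s3 i)] using Nat.count_monotone (fun m => i m = 0)

theorem tendsto_div_of_tendsto_mul_div {c : ℕ → ℕ} (hc : Monotone c) {L : ℕ} (hL : 0 < L)
    {ρ : ℝ} (h : Tendsto (fun N : ℕ => (c (L * N) : ℝ) / (L * N : ℕ)) atTop (𝓝 ρ)) :
    Tendsto (fun n : ℕ => (c n : ℝ) / n) atTop (𝓝 ρ) := by
  set g : ℕ → ℝ := fun N => (c (L * N) : ℝ) / (L * N : ℕ)
  have hq : Tendsto (· / L) atTop atTop := Nat.tendsto_div_const_atTop hL.ne'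
  have hratio : Tendsto (fun q : ℕ => (q : ℝ) / (q + 1)) atTop (𝓝 1) :=
    tendsto_natCast_div_add_atTop 1
  have hlower : Tendsto (fun n => g (n / L) * ((n / L : ℕ) / ((n / L : ℕ) + 1 : ℝ))) atTop
      (𝓝 ρ) := by
    simpa [Function.comp_def] using (h.mul hratio).comp hq
  have hupper : Tendsto (fun n => g (n / L + 1) * ((n / L : ℕ) / ((n / L : ℕ) + 1 : ℝ))⁻¹)
      atTop (𝓝 ρ) := by
    simpa [Function.comp_def] using
      ((h.comp (tendsto_add_atTop_nat 1)).mul (hratio.inv₀ one_ne_zero)).comp hq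
  refine tendsto_of_tendsto_of_tendsto_of_le_of_le' hlower hupper ?_ ?_ <;>
    filter_upwards [eventually_ge_atTop L] with n hn
  all_goals
    have hq1 : 1 ≤ n / L := (Nat.one_le_div_iff hL).mpr hn
    have hlo : L * (n / L) ≤ n := Nat.mul_div_le n L
    have hhi : n ≤ L * (n / L + 1) := (Nat.lt_mul_div_succ n hL).le
    have hn0 : (0 : ℝ) < n := by norm_cast; omega
    simp only [g]
  · calc (c (L * (n / L)) : ℝ) / (L * (n / L) : ℕ) * ((n / L : ℕ) / ((n / L : ℕ) + 1 : ℝ))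
        = c (L * (n / L)) / (L * (n / L + 1) : ℕ) := by
          field_simp
          push_cast
          ring
      _ ≤ c n / n := div_le_div₀ (by positivity) (by exact_mod_cast hc hlo) hn0
          (by exact_mod_cast hhi)
  · calc (c n : ℝ) / n ≤ c (L * (n / L + 1)) / (L * (n / L) : ℕ) :=
          div_le_div₀ (by positivity) (by exact_mod_cast hc hhi) (by positivity)
            (by exact_mod_cast hlo)
      _ = _ := by
          field_simp
          push_cast
          ring

theorem hasFreqZero_iff_tendsto_mul {i : ℕ → ℕ} {L : ℕ} (hL : 0 < L) {r : ℝ} :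
    hasFreqZero i r ↔
      Tendsto (fun N : ℕ => (countZeros i (L * N) : ℝ) / (L * N : ℕ)) atTop (𝓝 r) :=
  ⟨fun h => h.comp (tendsto_id.const_mul_atTop' hL),
    tendsto_div_of_tendsto_mul_div (countZeros_monotone i) hL⟩

theorem List.count_getD_length {α : Type*} [DecidableEq α] (w : List α) (x d : α) :
    Nat.count (fun p => w.getD p d = x) w.length = w.count x := by
  induction w with
  | nil => simp
  | cons a w ih =>
    simp only [List.length_cons, Nat.count_succ', List.getD_cons_succ, List.getD_cons_zero, ih,
      List.count_cons, beq_iff_eq]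

theorem length_wordU0 (k : ℕ) : (wordU0 k).length = 2 * k + 3 := by
  simp [wordU0]; ring

theorem length_wordU1 (k : ℕ) : (wordU1 k).length = 2 * k + 3 := by
  simp [wordU1]; ring

theorem count_zero_wordU0 (k : ℕ) : (wordU0 k).count 0 = k + 1 := by
  simp [wordU0, List.count_flatten]

theorem count_zero_wordU1 (k : ℕ) : (wordU1 k).count 0 = k + 2 := by
  simp [wordU1, List.count_flatten]

def blockConcat (k : ℕ) (j : ℕ → ℕ) (n : ℕ) : ℕ :=
  (if j (n / (2 * k + 3)) = 0 then wordU1 k else wordU0 k).getD (n % (2 * k + 3)) 0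

theorem blockConcat_mem_sigmaSet (k : ℕ) (j : ℕ → ℕ) : blockConcat k j ∈ sigmaSet k :=
  ⟨fun m => j m != 0, fun n => by simp [blockConcat, ite_not]⟩

theorem blockConcat_mul_add (k : ℕ) (j : ℕ → ℕ) (N : ℕ) {p : ℕ} (hp : p < 2 * k + 3) :
    blockConcat k j ((2 * k + 3) * N + p) =
      (if j N = 0 then wordU1 k else wordU0 k).getD p 0 := by
  have hL : 0 < 2 * k + 3 := by omega
  simp only [blockConcat, Nat.mul_add_div hL, Nat.mul_add_mod, Nat.div_eq_of_lt hp,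
    Nat.mod_eq_of_lt hp, add_zero]

theorem countZeros_blockConcat_mul (k : ℕ) (j : ℕ → ℕ) (N : ℕ) :
    countZeros (blockConcat k j) ((2 * k + 3) * N) = (k + 1) * N + countZeros j N := by
  induction N with
  | zero => simp [countZeros]
  | succ N ih =>
    have hblock : Nat.count (fun p => blockConcat k j ((2 * k + 3) * N + p) = 0) (2 * k + 3) =
        (if j N = 0 then wordU1 k else wordU0 k).count 0 := by
      have hlen : (if j N = 0 then wordU1 k else wordU0 k).length = 2 * k + 3 := by
        split_ifs <;> simp only [length_wordU0, length_wordU1]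
      rw [← List.count_getD_length _ _ 0, hlen, Nat.count_eq_card_filter_range,
        Nat.count_eq_card_filter_range]
      refine congrArg Finset.card (Finset.filter_congr fun p hp => ?_)
      rw [blockConcat_mul_add k j N (Finset.mem_range.mp hp)]
    simp only [countZeros_eq_count_s3] at ih ⊢
    rw [mul_add_one, Nat.count_add, ih, hblock, Nat.count_succ]
    split_ifs <;> simp only [count_zero_wordU0, count_zero_wordU1] <;> ring

theorem hasFreqZero_blockConcat_iff (k : ℕ) (j : ℕ → ℕ) (r : ℝ) :
    hasFreqZero (blockConcat k j) r ↔ hasFreqZero j ((2 * k + 3) * r - (k + 1)) := by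
  have hL : (0 : ℝ) < 2 * k + 3 := by positivity
  have hratio : ∀ᶠ N : ℕ in atTop,
      (countZeros (blockConcat k j) ((2 * k + 3) * N) : ℝ) / ((2 * k + 3) * N : ℕ) =
        ((k + 1) + (countZeros j N : ℝ) / N) / (2 * k + 3) := by
    filter_upwards [eventually_ge_atTop 1] with N hN
    have hN : (0 : ℝ) < N := by exact_mod_cast hN
    rw [countZeros_blockConcat_mul]
    field_simp
    push_cast
    ring
  rw [hasFreqZero_iff_tendsto_mul (by omega : 0 < 2 * k + 3), tendsto_congr' hratio]
  unfold hasFreqZero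
  constructor
  · intro h
    convert (h.const_mul (2 * k + 3 : ℝ)).sub_const ((k : ℝ) + 1) using 2
    field_simp
    ring
  · intro h
    convert (h.const_add ((k : ℝ) + 1)).div_const (2 * k + 3 : ℝ) using 2
    field_simp
    ring

theorem Nat.floor_add_eq_or {x t : ℝ} (hx : 0 ≤ x) (ht₀ : 0 ≤ t) (ht₁ : t ≤ 1) :
    ⌊x + t⌋₊ = ⌊x⌋₊ ∨ ⌊x + t⌋₊ = ⌊x⌋₊ + 1 := by
  have hle : ⌊x⌋₊ ≤ ⌊x + t⌋₊ := Nat.floor_le_floor (by linarith)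
  have hge : ⌊x + t⌋₊ ≤ ⌊x⌋₊ + 1 :=
    (Nat.floor_le_floor (by linarith : x + t ≤ x + 1)).trans_eq (Nat.floor_add_one hx)
  omega

def floorJumpSeq (t : ℝ) (m : ℕ) : ℕ := if ⌊t * (m + 1)⌋₊ = ⌊t * m⌋₊ then 1 else 0

theorem countZeros_floorJumpSeq {t : ℝ} (ht₀ : 0 ≤ t) (ht₁ : t ≤ 1) (N : ℕ) :
    countZeros (floorJumpSeq t) N = ⌊t * N⌋₊ := by
  induction N with
  | zero => simp [countZeros]
  | succ N ih =>
    rw [countZeros_eq_count_s3, Nat.count_succ, ← countZeros_eq_count_s3, ih, floorJumpSeq]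
    push_cast
    rcases Nat.floor_add_eq_or (by positivity : 0 ≤ t * N) ht₀ ht₁ with h | h <;>
      rw [mul_add_one] <;> simp [h]

theorem exists_hasFreqZero {t : ℝ} (ht₀ : 0 ≤ t) (ht₁ : t ≤ 1) : ∃ j, hasFreqZero j t := by
  refine ⟨floorJumpSeq t, ?_⟩
  simpa only [hasFreqZero, countZeros_floorJumpSeq ht₀ ht₁, Function.comp_def] using
    (tendsto_nat_floor_mul_div_atTop ht₀).comp tendsto_natCast_atTop_atTop

def logParity (m : ℕ) : ℕ := Nat.log 2 m % 2

theorem countZeros_logParity_two_pow_succ (J : ℕ) :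
    countZeros logParity (2 ^ (J + 1)) =
      countZeros logParity (2 ^ J) + if J % 2 = 0 then 2 ^ J else 0 := by
  have hlog : ∀ m < 2 ^ J, Nat.log 2 (2 ^ J + m) = J := fun m hm =>
    Nat.log_eq_of_pow_le_of_lt_pow (by omega) (by rw [pow_succ]; omega)
  simp only [countZeros_eq_count_s3]
  rw [pow_succ, mul_two, Nat.count_add]
  congr 1
  split_ifs with hJ
  · exact Nat.count_iff_forall.mpr fun m hm => by simp [logParity, hlog m hm, hJ]
  · exact Nat.count_iff_forall_not.mpr fun m hm => by simp [logParity, hlog m hm, hJ]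

theorem not_hasFreqZero_logParity (r : ℝ) : ¬ hasFreqZero logParity r := by
  intro h
  set y : ℕ → ℝ := fun J => (countZeros logParity (2 ^ J) : ℝ) / (2 ^ J : ℕ)
  have hy : Tendsto y atTop (𝓝 r) := h.comp (tendsto_pow_atTop_atTop_of_one_lt one_lt_two)
  have hstep : ∀ J, 2 * y (J + 1) - y J = if J % 2 = 0 then 1 else 0 := by
    intro J
    simp only [y, countZeros_logParity_two_pow_succ]
    split_ifs <;> push_cast <;> field_simp <;> ring
  have hlim : Tendsto (fun J => 2 * y (J + 1) - y J) atTop (𝓝 r) := by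
    simpa [two_mul] using ((hy.comp (tendsto_add_atTop_nat 1)).const_mul 2).sub hy
  have h_even : r = 1 := tendsto_nhds_unique (hlim.comp (tendsto_id.const_mul_atTop' two_pos))
    (by simp [Function.comp_def, hstep])
  have h_odd : r = 0 := tendsto_nhds_unique
    (hlim.comp ((tendsto_add_atTop_nat 1).comp (tendsto_id.const_mul_atTop' two_pos)))
    (by simp [Function.comp_def, hstep, Nat.add_mod])
  linarith

theorem stmt3_general (k : ℕ) :
    (∀ r : ℝ, r ∈ Set.Icc ((k + 1 : ℝ) / (2 * k + 3)) ((k + 2 : ℝ) / (2 * k + 3)) →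
      ∃ i ∈ sigmaSet k, hasFreqZero i r) ∧
    ∃ i ∈ sigmaSet k, ¬ ∃ r : ℝ, hasFreqZero i r := by
  refine ⟨fun r hr => ?_, blockConcat k logParity, blockConcat_mem_sigmaSet k logParity,
    fun ⟨r, hr⟩ => not_hasFreqZero_logParity _ ((hasFreqZero_blockConcat_iff k _ r).mp hr)⟩
  have hL : (0 : ℝ) < 2 * k + 3 := by positivity
  obtain ⟨j, hj⟩ := exists_hasFreqZero (t := (2 * k + 3) * r - (k + 1))
    (by linarith [(div_le_iff₀ hL).mp hr.1]) (by linarith [(le_div_iff₀ hL).mp hr.2])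
  exact ⟨blockConcat k j, blockConcat_mem_sigmaSet k j, (hasFreqZero_blockConcat_iff k j r).mpr hj⟩

theorem stmt3 (k : ℕ) (hk : 2 ≤ k) :
    (∀ r : ℝ, r ∈ Set.Icc ((k + 1 : ℝ) / (2 * k + 3)) ((k + 2 : ℝ) / (2 * k + 3)) →
      ∃ i ∈ sigmaSet k, hasFreqZero i r) ∧
    ∃ i ∈ sigmaSet k, ¬ ∃ r : ℝ, hasFreqZero i r :=
  stmt3_general k
end
end

section
/- Let λ ∈ (1/2, 1) and k ∈ ℕ satisfy 0 < 2λ − 1 < λ^{k−1}(1−λ). Let S₀(x) = λx, S₁(x) = λ(x+1), I = [0, λ/(1−λ)]. Then S₀(I) ∩ S₁∘S₀^{k−2}∘S₁(I) = ∅ and S₁(I) ∩ S₀∘S₁^{k−2}∘S₀(I) = ∅. Consequently, 10^{k−1} is the only word w of length k starting with 1 such that S_w(I) ∩ S₀(I) ≠ ∅, and 01^{k−1} is the only word of length k starting with 0 such that S_w(I) ∩ S₁(I) ≠ ∅. -/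
noncomputable section

/-- `S₀(x) = λx`, `S₁(x) = λ(x+1)`; `false` codes the digit 0 and `true` the digit 1. -/
def Smap (l : ℝ) (b : Bool) : ℝ → ℝ := fun x => l * (x + if b then 1 else 0)

/-- `S_w = S_{w₁} ∘ ⋯ ∘ S_{w_k}` for a finite word `w`. -/
def Sword (l : ℝ) (w : List Bool) : ℝ → ℝ := w.foldr (fun b f => Smap l b ∘ f) id

/-!
The reflection `x ↦ λ/(1-λ) - x` maps `I` onto itself and conjugates `S₀` to `S₁`, so the
statements about words starting with `0` are mirror images of those about words starting with `1`.
For the latter, a word `1v` whose tail `v` contains a `1` maps `I` into `[λ + λ^k, ∞)`, while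
`S₀(I) = [0, λ²/(1-λ)]`; the condition `2λ - 1 < λ^{k-1}(1-λ)` says exactly that
`λ²/(1-λ) < λ + λ^k`.
-/

open Set

theorem Smap.not_reflect {l : ℝ} (hl : l ≠ 1) (b : Bool) (x : ℝ) :
    Smap l (!b) (l / (1 - l) - x) = l / (1 - l) - Smap l b x := by
  have : 1 - l ≠ 0 := sub_ne_zero.mpr hl.symm
  cases b <;> simp [Smap] <;> field_simp <;> ring

namespace Sword

variable {l : ℝ}

theorem cons (b : Bool) (w : List Bool) : Sword l (b :: w) = Smap l b ∘ Sword l w := rfl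

theorem singleton (b : Bool) : Sword l [b] = Smap l b := rfl

theorem nonneg (hl : 0 ≤ l) (w : List Bool) {x : ℝ} (hx : 0 ≤ x) : 0 ≤ Sword l w x := by
  induction w with
  | nil => exact hx
  | cons b w ih =>
    have : (0 : ℝ) ≤ if b then 1 else 0 := by split <;> norm_num
    exact mul_nonneg hl (add_nonneg ih this)

theorem pow_length_le (hl0 : 0 ≤ l) (hl1 : l ≤ 1) {w : List Bool} (hw : true ∈ w) {x : ℝ}
    (hx : 0 ≤ x) : l ^ w.length ≤ Sword l w x := by
  induction w with
  | nil => simp at hw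
  | cons b w ih =>
    rw [List.length_cons, pow_succ', cons, Function.comp_apply, Smap]
    refine mul_le_mul_of_nonneg_left ?_ hl0
    have hS := nonneg hl0 w hx
    rcases List.mem_cons.mp hw with rfl | hw
    · have := pow_le_one₀ hl0 hl1 (n := w.length)
      simp only [if_true]
      linarith
    · have : (0 : ℝ) ≤ if b then 1 else 0 := by split <;> norm_num
      linarith [ih hw]

theorem map_not_reflect (hl : l ≠ 1) (w : List Bool) (x : ℝ) :
    Sword l (w.map not) (l / (1 - l) - x) = l / (1 - l) - Sword l w x := by
  induction w with
  | nil => rfl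
  | cons b w ih =>
    rw [List.map_cons, cons, cons, Function.comp_apply, ih, Smap.not_reflect hl]
    rfl

theorem image_map_not (hl : l ≠ 1) (w : List Bool) :
    Sword l (w.map not) '' Icc 0 (l / (1 - l)) =
      (l / (1 - l) - ·) '' (Sword l w '' Icc 0 (l / (1 - l))) := by
  have hI : (l / (1 - l) - ·) '' Icc 0 (l / (1 - l)) = Icc 0 (l / (1 - l)) := by
    rw [image_const_sub_Icc, sub_self, sub_zero]
  conv_lhs => rw [← hI]
  simp only [image_image, map_not_reflect hl]

end Sword

theorem div_one_sub_lt_pow_add_one {l : ℝ} {n : ℕ} (hl1 : l < 1)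
    (h : 2 * l - 1 < l ^ n * (1 - l)) : l / (1 - l) < l ^ n + 1 := by
  rw [div_lt_iff₀ (sub_pos.mpr hl1)]
  linarith

section Disjointness

variable {l : ℝ} (hl0 : 0 < l) (hl1 : l < 1)
include hl0 hl1

theorem disjoint_image_Sword_cons_true {v : List Bool} (hv : true ∈ v)
    (hΛ : 2 * l - 1 < l ^ v.length * (1 - l)) :
    Disjoint (Sword l (true :: v) '' Icc 0 (l / (1 - l))) (Smap l false '' Icc 0 (l / (1 - l))) := by
  rw [disjoint_left]
  rintro _ ⟨x, ⟨hx0, -⟩, rfl⟩ ⟨y, ⟨-, hyc⟩, hy⟩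
  have hlow := Sword.pow_length_le hl0.le hl1.le hv hx0
  have hc := div_one_sub_lt_pow_add_one hl1 hΛ
  simp only [Sword.cons, Function.comp_apply, Smap, if_true, Bool.false_eq_true, if_false,
    add_zero] at hy
  have : l * y < l * (Sword l v x + 1) := mul_lt_mul_of_pos_left (by linarith) hl0
  exact this.ne hy

theorem disjoint_image_Sword_cons {b : Bool} {v : List Bool} (hv : b ∈ v)
    (hΛ : 2 * l - 1 < l ^ v.length * (1 - l)) :
    Disjoint (Sword l (b :: v) '' Icc 0 (l / (1 - l))) (Smap l (!b) '' Icc 0 (l / (1 - l))) := by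
  cases b
  · have key := disjoint_image_Sword_cons_true hl0 hl1 (v := v.map not) (by simpa using hv)
      (by simpa using hΛ)
    have := (disjoint_image_iff (sub_right_injective (b := l / (1 - l)))).mpr key
    rw [← Sword.singleton, ← Sword.image_map_not hl1.ne, ← Sword.image_map_not hl1.ne] at this
    simpa [Function.comp_def, Sword.singleton] using this
  · exact disjoint_image_Sword_cons_true hl0 hl1 hv hΛ

theorem eq_cons_replicate_of_inter_nonempty {b : Bool} {k : ℕ} {w : List Bool}
    (hw : w.length = k) (hb : w.head? = some b) (hΛ : 2 * l - 1 < l ^ (k - 1) * (1 - l))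
    (hne : (Sword l w '' Icc 0 (l / (1 - l)) ∩ Smap l (!b) '' Icc 0 (l / (1 - l))).Nonempty) :
    w = b :: List.replicate (k - 1) (!b) := by
  obtain ⟨v, rfl⟩ := List.head?_eq_some_iff.mp hb
  have hv : v.length = k - 1 := by simp only [List.length_cons] at hw; omega
  rw [List.cons.injEq, List.eq_replicate_iff]
  refine ⟨rfl, hv, fun c hc => ?_⟩
  by_contra hcb
  obtain rfl : c = b := by simpa using hcb
  exact not_disjoint_iff_nonempty_inter.mpr hne (disjoint_image_Sword_cons hl0 hl1 hc (hv ▸ hΛ))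

end Disjointness

theorem stmt13 (l : ℝ) (k : ℕ) (hk : 2 ≤ k) (hl0 : 1 / 2 < l) (hl1 : l < 1)
    (hΛ : 2 * l - 1 < l ^ (k - 1) * (1 - l)) :
    (Smap l false '' Set.Icc 0 (l / (1 - l))) ∩
        (Sword l (true :: (List.replicate (k - 2) false ++ [true])) ''
          Set.Icc 0 (l / (1 - l))) = ∅ ∧
    (Smap l true '' Set.Icc 0 (l / (1 - l))) ∩
        (Sword l (false :: (List.replicate (k - 2) true ++ [false])) ''
          Set.Icc 0 (l / (1 - l))) = ∅ ∧
    (∀ w : List Bool, w.length = k → w.head? = some true →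
      ((Sword l w '' Set.Icc 0 (l / (1 - l))) ∩
        (Smap l false '' Set.Icc 0 (l / (1 - l)))).Nonempty →
      w = true :: List.replicate (k - 1) false) ∧
    (∀ w : List Bool, w.length = k → w.head? = some false →
      ((Sword l w '' Set.Icc 0 (l / (1 - l))) ∩
        (Smap l true '' Set.Icc 0 (l / (1 - l)))).Nonempty →
      w = false :: List.replicate (k - 1) true) := by
  have hlpos : 0 < l := by linarith
  have hlen (a b : Bool) : (List.replicate (k - 2) a ++ [b]).length = k - 1 := by
    simp only [List.length_append, List.length_replicate, List.length_singleton]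
    omega
  refine ⟨?_, ?_, fun w hw hb hne => eq_cons_replicate_of_inter_nonempty hlpos hl1 hw hb hΛ hne,
    fun w hw hb hne => eq_cons_replicate_of_inter_nonempty hlpos hl1 hw hb hΛ hne⟩
  · rw [inter_comm, ← disjoint_iff_inter_eq_empty]
    exact disjoint_image_Sword_cons hlpos hl1 (b := true) (by simp) (by rwa [hlen])
  · rw [inter_comm, ← disjoint_iff_inter_eq_empty]
    exact disjoint_image_Sword_cons hlpos hl1 (b := false) (by simp) (by rwa [hlen])
end
end

section
/- Let λ ∈ (1/2, 1) and k ∈ ℕ with 2λ − 1 < λ^{k−1}(1−λ), and let η > 0 be small enough that every ball B(x,η) with x ∈ I_λ meets S_w(I_λ) for at most two words w ∈ {0,1}^k. Then for every n ≥ 1 and every x ∈ I_λ, the number of words w ∈ {0,1}^{kn} such that S_w(I_λ) ∩ B(x, λ^{(n−1)k} η) ≠ ∅ is at most 2^n. -/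
/-!
Every `Sword l w` is the affine map `u ↦ l ^ |w| * u + Sword l w 0`, and it maps
`I = [0, l / (1 - l)]` into itself. Split a word of length `k (n + 1)` as `j ++ t` with `|j| = k`.
If `S_{jt}(I)` meets `B(x, l^{nk} η)`, then `S_j(I)` meets `B(x, η)`, which happens for at most two
words `j`, and `S_t(I)` meets `S_j⁻¹ B(x, l^{nk} η) = B(S_j⁻¹ x, l^{(n-1)k} η)`, which by induction
happens for at most `2 ^ n` words `t`. The induction needs the hypothesis on `η` at centres outside
`I`; projecting the centre onto `I` only shrinks its distance to points of `I`.
-/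

noncomputable section

open Set Metric

theorem Sword_append (l : ℝ) (u v : List Bool) :
    Sword l (u ++ v) = Sword l u ∘ Sword l v := by
  induction u with
  | nil => rfl
  | cons b u ih => simp only [List.cons_append, Sword, List.foldr_cons] at ih ⊢; rw [ih]; rfl

theorem Sword_apply (l : ℝ) (w : List Bool) (u : ℝ) :
    Sword l w u = l ^ w.length * u + Sword l w 0 := by
  induction w generalizing u with
  | nil => simp [Sword]
  | cons b w ih =>
    simp only [Sword, List.foldr_cons, Function.comp_apply, Smap, List.length_cons] at ih ⊢
    rw [ih u, ih 0]
    ring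

theorem mapsTo_Sword {l : ℝ} (hl0 : 0 ≤ l) (hl1 : l < 1) (w : List Bool) :
    MapsTo (Sword l w) (Icc 0 (l / (1 - l))) (Icc 0 (l / (1 - l))) := by
  have hl1' : 1 - l ≠ 0 := by linarith
  have hM : l * (l / (1 - l) + 1) = l / (1 - l) := by field_simp; ring
  induction w with
  | nil => exact mapsTo_id _
  | cons b w ih =>
    intro u hu
    obtain ⟨h0, h1⟩ := ih hu
    have hb : (0 : ℝ) ≤ if b then 1 else 0 := by split_ifs <;> norm_num
    refine ⟨mul_nonneg hl0 (add_nonneg h0 hb), ?_⟩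
    calc l * (Sword l w u + if b then 1 else 0) ≤ l * (l / (1 - l) + 1) := by
          gcongr; split_ifs <;> linarith
      _ = l / (1 - l) := hM

theorem dist_Sword_lt_iff {l : ℝ} (hl : 0 < l) (w : List Bool) (u x r : ℝ) :
    dist (Sword l w u) x < l ^ w.length * r ↔
      dist u ((x - Sword l w 0) / l ^ w.length) < r := by
  have hpow : 0 < l ^ w.length := pow_pos hl _
  have hsub : u - (x - Sword l w 0) / l ^ w.length = (Sword l w u - x) / l ^ w.length := by
    rw [Sword_apply l w u]
    field_simp
    ring
  have hdist : dist u ((x - Sword l w 0) / l ^ w.length) =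
      dist (Sword l w u) x / l ^ w.length := by
    rw [Real.dist_eq, Real.dist_eq, hsub, abs_div, abs_of_pos hpow]
  rw [hdist, div_lt_iff₀' hpow]

def wordsNear (l : ℝ) (m : ℕ) (x r : ℝ) : Set (Fin m → Bool) :=
  {w | ((Sword l (List.ofFn w) '' Icc 0 (l / (1 - l))) ∩ ball x r).Nonempty}

theorem wordsNear_mono {l r r' : ℝ} {m : ℕ} (x : ℝ) (h : r ≤ r') :
    wordsNear l m x r ⊆ wordsNear l m x r' :=
  fun _ ⟨y, hyS, hyx⟩ ↦ ⟨y, hyS, ball_subset_ball h hyx⟩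

theorem wordsNear_subset_projIcc {l : ℝ} (hl0 : 0 ≤ l) (hl1 : l < 1) (m : ℕ) (x r : ℝ) :
    wordsNear l m x r ⊆
      wordsNear l m (projIcc 0 (l / (1 - l)) (by bound) x) r := by
  rintro w ⟨_, ⟨u, hu, rfl⟩, hux⟩
  have hI := mapsTo_Sword hl0 hl1 (List.ofFn w) hu
  refine ⟨_, ⟨u, hu, rfl⟩, ?_⟩
  rw [mem_ball, Real.dist_eq] at hux ⊢
  calc |_ - _|
      = |(projIcc 0 (l / (1 - l)) _ (Sword l (List.ofFn w) u) : ℝ) - projIcc _ _ _ x| := by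
        rw [projIcc_of_mem _ hI]
    _ ≤ _ := abs_projIcc_sub_projIcc _
    _ < r := hux

theorem wordsNear_add_subset {l : ℝ} (hl0 : 0 < l) (hl1 : l < 1) (a b : ℕ) (x r : ℝ) :
    wordsNear l (a + b) x (l ^ a * r) ⊆
      ⋃ j ∈ wordsNear l a x (l ^ a * r),
        Fin.append j '' wordsNear l b ((x - Sword l (List.ofFn j) 0) / l ^ a) r := by
  intro w hw
  rw [← Fin.append_castAdd_natAdd (f := w)] at hw ⊢
  set j : Fin a → Bool := fun i ↦ w (Fin.castAdd b i)
  set t : Fin b → Bool := fun i ↦ w (Fin.natAdd a i)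
  obtain ⟨_, ⟨u, hu, rfl⟩, hux⟩ := hw
  rw [List.ofFn_fin_append, Sword_append, Function.comp_apply] at hux
  have htu := mapsTo_Sword hl0.le hl1 (List.ofFn t) hu
  refine mem_biUnion (x := j) ⟨_, ⟨_, htu, rfl⟩, hux⟩ ⟨t, ⟨_, ⟨u, hu, rfl⟩, ?_⟩, rfl⟩
  simpa using (dist_Sword_lt_iff hl0 (List.ofFn j) _ x r).1 (by simpa using hux)

theorem Set.ncard_le_mul_of_subset_biUnion {ι α : Type*} [Finite ι] [Finite α] {s : Set ι}
    {t : ι → Set α} {u : Set α} {N : ℕ} (hu : u ⊆ ⋃ i ∈ s, t i)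
    (ht : ∀ i ∈ s, (t i).ncard ≤ N) : u.ncard ≤ s.ncard * N := by
  have hs := s.toFinite
  calc u.ncard ≤ (⋃ i ∈ hs.toFinset, t i).ncard := by
        simpa only [Finite.mem_toFinset] using ncard_le_ncard hu
    _ ≤ ∑ i ∈ hs.toFinset, (t i).ncard := Finset.set_ncard_biUnion_le _ _
    _ ≤ hs.toFinset.card * N :=
        Finset.sum_le_card_nsmul _ _ _ fun i hi ↦ ht i (hs.mem_toFinset.1 hi)
    _ = s.ncard * N := by rw [ncard_eq_toFinset_card s hs]

theorem ncard_wordsNear_le {l η : ℝ} {k : ℕ} (hl0 : 0 < l) (hl1 : l < 1) (hη : 0 ≤ η)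
    (hbase : ∀ x, (wordsNear l k x η).ncard ≤ 2) (m : ℕ) (x : ℝ) :
    (wordsNear l (k * (m + 1)) x (l ^ (m * k) * η)).ncard ≤ 2 ^ (m + 1) := by
  induction m generalizing x with
  | zero =>
    rw [zero_add, mul_one, zero_mul, pow_zero, one_mul, pow_one]
    exact hbase x
  | succ m ih =>
    have hlen : k * (m + 1 + 1) = k + k * (m + 1) := by ring
    have hrad : l ^ ((m + 1) * k) * η = l ^ k * (l ^ (m * k) * η) := by ring
    have hshrink : l ^ k * (l ^ (m * k) * η) ≤ η := by
      rw [← hrad]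
      exact mul_le_of_le_one_left hη (pow_le_one₀ hl0.le hl1.le)
    rw [hlen, hrad, pow_succ']
    refine (ncard_le_mul_of_subset_biUnion (wordsNear_add_subset hl0 hl1 k _ x _)
      fun j _ ↦ (ncard_image_le (toFinite _)).trans (ih _)).trans (Nat.mul_le_mul_right _ ?_)
    exact (ncard_le_ncard (wordsNear_mono x hshrink)).trans (hbase x)

theorem stmt14_general (l : ℝ) (k : ℕ) (hl0 : 1 / 2 < l) (hl1 : l < 1)
    (η : ℝ) (hη : 0 < η)
    (hbase : ∀ x ∈ Set.Icc (0 : ℝ) (l / (1 - l)),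
      {w : Fin k → Bool |
        ((Sword l (List.ofFn w) '' Set.Icc 0 (l / (1 - l))) ∩
          Metric.ball x η).Nonempty}.ncard ≤ 2) :
    ∀ n : ℕ, 1 ≤ n → ∀ x ∈ Set.Icc (0 : ℝ) (l / (1 - l)),
      {w : Fin (k * n) → Bool |
        ((Sword l (List.ofFn w) '' Set.Icc 0 (l / (1 - l))) ∩
          Metric.ball x (l ^ ((n - 1) * k) * η)).Nonempty}.ncard ≤ 2 ^ n := by
  have hl : 0 < l := by linarith
  have hbase_real (x : ℝ) : (wordsNear l k x η).ncard ≤ 2 :=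
    (ncard_le_ncard (wordsNear_subset_projIcc hl.le hl1 k x η)).trans
      (hbase _ (Subtype.mem _))
  rintro n hn x -
  obtain ⟨m, rfl⟩ := Nat.exists_eq_add_of_le' hn
  rw [Nat.add_sub_cancel]
  exact ncard_wordsNear_le hl hl1 hη.le hbase_real m x

theorem stmt14 (l : ℝ) (k : ℕ) (hk : 2 ≤ k) (hl0 : 1 / 2 < l) (hl1 : l < 1)
    (hΛ : 2 * l - 1 < l ^ (k - 1) * (1 - l))
    (η : ℝ) (hη : 0 < η)
    (hbase : ∀ x ∈ Set.Icc (0 : ℝ) (l / (1 - l)),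
      {w : Fin k → Bool |
        ((Sword l (List.ofFn w) '' Set.Icc 0 (l / (1 - l))) ∩
          Metric.ball x η).Nonempty}.ncard ≤ 2) :
    ∀ n : ℕ, 1 ≤ n → ∀ x ∈ Set.Icc (0 : ℝ) (l / (1 - l)),
      {w : Fin (k * n) → Bool |
        ((Sword l (List.ofFn w) '' Set.Icc 0 (l / (1 - l))) ∩
          Metric.ball x (l ^ ((n - 1) * k) * η)).Nonempty}.ncard ≤ 2 ^ n :=
  stmt14_general l k hl0 hl1 η hη hbase
end
end

section
/- Let λ ∈ (1/2,1), k ∈ ℕ with 2λ − 1 < λ^{k−1}(1−λ), and suppose that for all x ∈ I_λ and all n, #{w ∈ {0,1}^{kn} : S_w(I_λ) ∩ B(x, λ^{(n−1)k}η) ≠ ∅} ≤ 2^n for some fixed η > 0. Then for every x ∈ I_λ, the unbiased Bernoulli convolution ν_λ satisfies d̲(ν_λ, x) ≥ (k−1)log 2/(k|log λ|). In particular, there exist C, δ > 0 (depending on λ) with ν_λ(J) ≤ C|J|^δ for every interval J ⊆ I_λ. -/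
open MeasureTheory

noncomputable section

/-!
Iterating the self-similarity equation `m` times writes `ν` as the average of its images under
the `2 ^ m` maps `S_w`, `|w| = m`, and the image under `S_w` is carried by the cylinder
`S_w(I)`, `I = [0, λ/(1-λ)]`. Hence a set meeting at most `N` cylinders of depth `m` has mass at
most `N 2⁻ᵐ`; for `λ^{nk} η ≤ r ≤ λ^{(n-1)k} η` the counting hypothesis gives
`ν(B(x, r)) ≤ 2ⁿ 2^{-nk} = (λ^{nk})^d ≤ (r/η)^d` with `d = (k-1) log 2 / (k |log λ|)`.
Conversely, since `λ ≥ 1/2` the cylinders of each depth cover `I`, so a ball `B(x, r)` centred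
in `I` contains a whole cylinder of diameter `< r`, whence
`ν(B(x, r)) ≥ ((1-λ) r)^{log 2/|log λ|}`. This lower bound is what makes the liminf (taken in
`ℝ`, where unbounded families have junk limits) a genuine one. The bound on intervals follows by
writing `[a, b]` as a closed ball.
-/

open Real Filter Topology Metric Set

def IsSelfSimilar (l : ℝ) (ν : Measure ℝ) : Prop :=
  ν = ENNReal.ofReal (1 / 2) • ν.map (Smap l false) +
    ENNReal.ofReal (1 / 2) • ν.map (Smap l true)

lemma le_liminf_log_div_log {g : ℝ → ℝ} {c C d e : ℝ} (hc : 0 < c) (hC : 0 < C)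
    (hg : ∀ᶠ r in 𝓝[>] 0, c * r ^ e ≤ g r ∧ g r ≤ C * r ^ d) :
    d ≤ liminf (fun r => log (g r) / log r) (𝓝[>] 0) := by
  have hlog : Tendsto log (𝓝[>] 0) atBot := tendsto_log_nhdsGT_zero
  have hd : Tendsto (fun r => d + log C / log r) (𝓝[>] 0) (𝓝 d) := by
    simpa using tendsto_const_nhds.add (tendsto_const_nhds.div_atBot hlog)
  have he : Tendsto (fun r => e + log c / log r) (𝓝[>] 0) (𝓝 e) := by
    simpa using tendsto_const_nhds.add (tendsto_const_nhds.div_atBot hlog)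
  have hbounds : ∀ᶠ r in 𝓝[>] 0, d + log C / log r ≤ log (g r) / log r ∧
      log (g r) / log r ≤ e + log c / log r := by
    filter_upwards [hg, Ioo_mem_nhdsGT one_pos] with r ⟨hlow, hup⟩ ⟨hr0, hr1⟩
    have hlr : log r < 0 := log_neg hr0 hr1
    have hgpos : 0 < g r := (by positivity : 0 < c * r ^ e).trans_le hlow
    rw [le_div_iff_of_neg hlr, div_le_iff_of_neg hlr]
    constructor
    · calc log (g r) ≤ log (C * r ^ d) := log_le_log hgpos hup
        _ = (d + log C / log r) * log r := by
          rw [log_mul hC.ne' (by positivity), log_rpow hr0]; field_simp [hlr.ne]; ring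
    · calc (e + log c / log r) * log r = log (c * r ^ e) := by
            rw [log_mul hc.ne' (by positivity), log_rpow hr0]; field_simp [hlr.ne]; ring
        _ ≤ log (g r) := log_le_log (by positivity) hlow
  calc d = liminf (fun r => d + log C / log r) (𝓝[>] 0) := hd.liminf_eq.symm
    _ ≤ _ := liminf_le_liminf (hbounds.mono fun _ h => h.1) hd.isBoundedUnder_ge
        (he.isBoundedUnder_le.mono_le (hbounds.mono fun _ h => h.2)).isCoboundedUnder_ge

lemma le_liminf_log_measure_div_log {α : Type*} [MeasurableSpace α] {μ : Measure α}
    [IsFiniteMeasure μ] {s : ℝ → Set α} {c C d e : ℝ} (hc : 0 < c) (hC : 0 < C)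
    (hs : ∀ᶠ r in 𝓝[>] 0, ENNReal.ofReal (c * r ^ e) ≤ μ (s r) ∧
      μ (s r) ≤ ENNReal.ofReal (C * r ^ d)) :
    d ≤ liminf (fun r => log (μ (s r)).toReal / log r) (𝓝[>] 0) := by
  refine le_liminf_log_div_log (e := e) hc hC ?_
  filter_upwards [hs, self_mem_nhdsWithin] with r ⟨hlow, hup⟩ (hr : 0 < r)
  exact ⟨(ENNReal.ofReal_le_iff_le_toReal (measure_ne_top μ _)).1 hlow,
    ENNReal.toReal_le_of_le_ofReal (by positivity) hup⟩

lemma measure_closedBall_le_of_forall_ball {α : Type*} [PseudoMetricSpace α] [MeasurableSpace α]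
    {μ : Measure α} {x : α} {C d r : ℝ} (hd : 0 ≤ d)
    (h : ∀ s > 0, μ (ball x s) ≤ ENNReal.ofReal (C * s ^ d)) (hr : 0 ≤ r) :
    μ (closedBall x r) ≤ ENNReal.ofReal (C * r ^ d) := by
  have hcont : Tendsto (fun s => ENNReal.ofReal (C * s ^ d)) (𝓝[>] r)
      (𝓝 (ENNReal.ofReal (C * r ^ d))) :=
    (ENNReal.continuous_ofReal.tendsto _).comp
      (((continuousAt_rpow_const r d (Or.inr hd)).const_mul C).tendsto.mono_left
        nhdsWithin_le_nhds)
  refine ge_of_tendsto hcont ?_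
  filter_upwards [self_mem_nhdsWithin] with s (hs : r < s)
  exact (measure_mono (closedBall_subset_ball hs)).trans (h s (hr.trans_lt hs))

lemma measure_Icc_le_of_forall_ball {μ : Measure ℝ} {C d a b : ℝ} (hC : 0 ≤ C) (hd : 0 ≤ d)
    (hab : a ≤ b) (h : ∀ s > 0, μ (ball ((a + b) / 2) s) ≤ ENNReal.ofReal (C * s ^ d)) :
    μ (Icc a b) ≤ ENNReal.ofReal (C * (b - a) ^ d) := by
  rw [Real.Icc_eq_closedBall]
  refine (measure_closedBall_le_of_forall_ball hd h (by linarith)).trans ?_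
  gcongr; linarith

lemma exists_pow_succ_mul_lt_le_pow_mul {q R r : ℝ} (hq0 : 0 < q) (hq1 : q < 1) (hr : 0 < r)
    (hrR : r ≤ R) : ∃ m : ℕ, q ^ (m + 1) * R < r ∧ r ≤ q ^ m * R := by
  have hR : 0 < R := hr.trans_le hrR
  obtain ⟨m, h1, h2⟩ :=
    exists_nat_pow_near_of_lt_one (div_pos hr hR) ((div_le_one hR).2 hrR) hq0 hq1
  exact ⟨m, (lt_div_iff₀ hR).1 h1, (div_le_iff₀ hR).1 h2⟩

lemma sword_cons (l : ℝ) (b : Bool) (w : List Bool) :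
    Sword l (b :: w) = Smap l b ∘ Sword l w := rfl

lemma sword_ofFn_cons (l : ℝ) {m : ℕ} (b : Bool) (w : Fin m → Bool) :
    Sword l (List.ofFn (Fin.cons b w)) = Smap l b ∘ Sword l (List.ofFn w) := by
  rw [List.ofFn_cons, sword_cons]

lemma continuous_smap (l : ℝ) (b : Bool) : Continuous (Smap l b) := by
  unfold Smap; fun_prop

lemma continuous_sword (l : ℝ) (w : List Bool) : Continuous (Sword l w) := by
  induction w with
  | nil => exact continuous_id
  | cons b w ih => exact (continuous_smap l b).comp ih

lemma sword_sub_sword (l : ℝ) (w : List Bool) (x y : ℝ) :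
    Sword l w x - Sword l w y = l ^ w.length * (x - y) := by
  induction w with
  | nil => simp [Sword]
  | cons b w ih =>
    simp only [sword_cons, Function.comp_apply, Smap, List.length_cons, pow_succ]
    linear_combination l * ih

section Cylinders

variable {l : ℝ}

lemma exists_mem_smap_image (hl0 : 1 / 2 ≤ l) (hl1 : l < 1) {x : ℝ}
    (hx : x ∈ Icc 0 (l / (1 - l))) : ∃ b, x ∈ Smap l b '' Icc 0 (l / (1 - l)) := by
  have hl : 0 < l := by linarith
  set L := l / (1 - l) with hL
  have hL1 : 1 ≤ L := by rw [hL, le_div_iff₀ (by linarith)]; linarith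
  have hLl : l * (L + 1) = L := by
    have : 1 - l ≠ 0 := by linarith
    rw [hL]; field_simp; ring
  obtain ⟨hx0, hxL⟩ := hx
  rcases le_or_gt x (l * L) with h | h
  · refine ⟨false, x / l, ⟨by positivity, (div_le_iff₀ hl).2 (by linarith)⟩, ?_⟩
    simp [Smap, mul_div_cancel₀ x hl.ne']
  · refine ⟨true, x / l - 1, ⟨?_, ?_⟩, ?_⟩
    · rw [sub_nonneg, le_div_iff₀ hl]; nlinarith
    · rw [sub_le_iff_le_add, div_le_iff₀ hl]; linarith
    · simp [Smap, mul_div_cancel₀ x hl.ne']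

lemma exists_mem_sword_image (hl0 : 1 / 2 ≤ l) (hl1 : l < 1) (m : ℕ) {x : ℝ}
    (hx : x ∈ Icc 0 (l / (1 - l))) :
    ∃ w : Fin m → Bool, x ∈ Sword l (List.ofFn w) '' Icc 0 (l / (1 - l)) := by
  induction m generalizing x with
  | zero => exact ⟨Fin.elim0, x, hx, rfl⟩
  | succ m ih =>
    obtain ⟨b, y, hy, rfl⟩ := exists_mem_smap_image hl0 hl1 hx
    obtain ⟨w, z, hz, rfl⟩ := ih hy
    exact ⟨Fin.cons b w, z, hz, by rw [sword_ofFn_cons]; rfl⟩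

lemma sword_image_subset_ball (hl : 0 ≤ l) (w : List Bool) {x r : ℝ}
    (hx : x ∈ Sword l w '' Icc 0 (l / (1 - l))) (hr : l ^ w.length * (l / (1 - l)) < r) :
    Sword l w '' Icc 0 (l / (1 - l)) ⊆ ball x r := by
  obtain ⟨y, ⟨hy0, hyL⟩, rfl⟩ := hx
  rintro _ ⟨u, ⟨hu0, huL⟩, rfl⟩
  rw [mem_ball, Real.dist_eq, sword_sub_sword, abs_mul, abs_of_nonneg (pow_nonneg hl _)]
  calc l ^ w.length * |u - y| ≤ l ^ w.length * (l / (1 - l)) := by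
        gcongr; exact abs_sub_le_iff.2 ⟨by linarith, by linarith⟩
    _ < r := hr

end Cylinders

section SelfSimilar

variable {l : ℝ} {ν : Measure ℝ}

lemma IsSelfSimilar.measure_eq (hss : IsSelfSimilar l ν) {B : Set ℝ} (hB : MeasurableSet B) :
    ν B = 2⁻¹ * ν (Smap l false ⁻¹' B) + 2⁻¹ * ν (Smap l true ⁻¹' B) := by
  conv_lhs => rw [hss]
  simp [Measure.map_apply (continuous_smap l _).measurable hB]

lemma IsSelfSimilar.measure_eq_sum (hss : IsSelfSimilar l ν) (m : ℕ) {B : Set ℝ}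
    (hB : MeasurableSet B) :
    ν B = ∑ w : Fin m → Bool, 2⁻¹ ^ m * ν (Sword l (List.ofFn w) ⁻¹' B) := by
  induction m generalizing B with
  | zero => simp [Sword]
  | succ m ih =>
    rw [hss.measure_eq hB, ih ((continuous_smap l false).measurable hB),
      ih ((continuous_smap l true).measurable hB),
      ← (Fin.consEquiv fun _ => Bool).sum_comp, Fintype.sum_prod_type, Fintype.sum_bool]
    simp only [Fin.consEquiv, Equiv.coe_fn_mk, sword_ofFn_cons, preimage_comp, pow_succ',
      mul_assoc, Finset.mul_sum]
    exact add_comm _ _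

variable [IsProbabilityMeasure ν]

lemma two_inv_pow_le_measure_sword_image (hss : IsSelfSimilar l ν)
    (hsupp : ν (Icc 0 (l / (1 - l)))ᶜ = 0) {m : ℕ} (w : Fin m → Bool) :
    2⁻¹ ^ m ≤ ν (Sword l (List.ofFn w) '' Icc 0 (l / (1 - l))) := by
  set S := Sword l (List.ofFn w) '' Icc 0 (l / (1 - l))
  rw [hss.measure_eq_sum m (isCompact_Icc.image (continuous_sword l _)).isClosed.measurableSet]
  calc 2⁻¹ ^ m = 2⁻¹ ^ m * ν (Icc 0 (l / (1 - l))) := by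
        rw [(prob_compl_eq_zero_iff measurableSet_Icc).1 hsupp, mul_one]
    _ ≤ 2⁻¹ ^ m * ν (Sword l (List.ofFn w) ⁻¹' S) := by
        gcongr; exact subset_preimage_image _ _
    _ ≤ _ := Finset.single_le_sum (f := fun v => 2⁻¹ ^ m * ν (Sword l (List.ofFn v) ⁻¹' S))
        (fun _ _ => zero_le) (Finset.mem_univ w)

lemma measure_le_ncard_mul (hss : IsSelfSimilar l ν) (hsupp : ν (Icc 0 (l / (1 - l)))ᶜ = 0)
    (m : ℕ) {B : Set ℝ} (hB : MeasurableSet B) :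
    ν B ≤ {w : Fin m → Bool |
      (Sword l (List.ofFn w) '' Icc 0 (l / (1 - l)) ∩ B).Nonempty}.ncard * 2⁻¹ ^ m := by
  classical
  set P : (Fin m → Bool) → Prop :=
    fun w => (Sword l (List.ofFn w) '' Icc 0 (l / (1 - l)) ∩ B).Nonempty
  have hnull : ∀ w, ¬ P w → ν (Sword l (List.ofFn w) ⁻¹' B) = 0 := fun w hw =>
    measure_mono_null (fun z hz hzI => hw ⟨_, mem_image_of_mem _ hzI, hz⟩) hsupp
  calc ν B = ∑ w, 2⁻¹ ^ m * ν (Sword l (List.ofFn w) ⁻¹' B) := hss.measure_eq_sum m hB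
    _ = ∑ w with P w, 2⁻¹ ^ m * ν (Sword l (List.ofFn w) ⁻¹' B) :=
        (Finset.sum_filter_of_ne fun w _ h => by_contra fun hw => h (by simp [hnull w hw])).symm
    _ ≤ ∑ w with P w, 2⁻¹ ^ m :=
        Finset.sum_le_sum fun _ _ => mul_le_of_le_one_right' prob_le_one
    _ = _ := by rw [Finset.sum_const, nsmul_eq_mul, ncard_eq_toFinset_card', toFinset_ofPred]

end SelfSimilar

section Dimension

variable {l : ℝ}

lemma pow_rpow_log_two_div_abs_log (hl0 : 0 < l) (hl1 : l < 1) (m : ℕ) :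
    (l ^ m) ^ (log 2 / |log l|) = (2⁻¹ : ℝ) ^ m := by
  have hlog : log l < 0 := log_neg hl0 hl1
  rw [rpow_def_of_pos (pow_pos hl0 m), ← exp_log (by positivity : (0 : ℝ) < 2⁻¹ ^ m)]
  congr 1
  rw [log_pow, log_pow, log_inv, abs_of_neg hlog]
  field_simp [hlog.ne]

lemma two_pow_mul_two_inv_pow_eq_rpow (hl0 : 0 < l) (hl1 : l < 1) {k : ℕ} (hk : k ≠ 0)
    (n : ℕ) :
    (2 : ℝ) ^ n * 2⁻¹ ^ (k * n) = (l ^ (n * k)) ^ ((k - 1) * log 2 / (k * |log l|)) := by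
  have hlog : log l < 0 := log_neg hl0 hl1
  rw [rpow_def_of_pos (pow_pos hl0 _),
    ← exp_log (by positivity : (0 : ℝ) < 2 ^ n * 2⁻¹ ^ (k * n))]
  congr 1
  rw [log_mul (by positivity) (by positivity), log_pow, log_pow, log_pow, log_inv,
    abs_of_neg hlog]
  push_cast
  field_simp [hlog.ne]
  ring

variable {ν : Measure ℝ} [IsProbabilityMeasure ν]

lemma ofReal_rpow_le_measure_ball (hss : IsSelfSimilar l ν)
    (hsupp : ν (Icc 0 (l / (1 - l)))ᶜ = 0) (hl0 : 1 / 2 ≤ l) (hl1 : l < 1) {x r : ℝ}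
    (hx : x ∈ Icc 0 (l / (1 - l))) (hr : 0 < r) (hrL : r ≤ l / (1 - l)) :
    ENNReal.ofReal (((1 - l) * r) ^ (log 2 / |log l|)) ≤ ν (ball x r) := by
  have hl : 0 < l := by linarith
  obtain ⟨m, hm, hrm⟩ := exists_pow_succ_mul_lt_le_pow_mul hl hl1 hr hrL
  obtain ⟨w, hxw⟩ := exists_mem_sword_image hl0 hl1 (m + 1) hx
  calc ENNReal.ofReal (((1 - l) * r) ^ (log 2 / |log l|))
      ≤ ENNReal.ofReal ((l ^ (m + 1)) ^ (log 2 / |log l|)) := by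
        gcongr
        calc (1 - l) * r ≤ (1 - l) * (l ^ m * (l / (1 - l))) := by gcongr
            _ = l ^ (m + 1) := by field_simp [(by linarith : 1 - l ≠ 0)]; ring
    _ = 2⁻¹ ^ (m + 1) := by
        rw [pow_rpow_log_two_div_abs_log hl hl1, ENNReal.ofReal_pow (by norm_num)]; simp
    _ ≤ ν (Sword l (List.ofFn w) '' Icc 0 (l / (1 - l))) :=
        two_inv_pow_le_measure_sword_image hss hsupp w
    _ ≤ ν (ball x r) :=
        measure_mono (sword_image_subset_ball hl.le _ hxw (by rwa [List.length_ofFn]))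

lemma measure_ball_le_rpow (hss : IsSelfSimilar l ν) (hsupp : ν (Icc 0 (l / (1 - l)))ᶜ = 0)
    {k : ℕ} (hk : 0 < k) (hl0 : 0 < l) (hl1 : l < 1) {η : ℝ} (hη : 0 < η)
    (hcount : ∀ n : ℕ, 1 ≤ n → ∀ x ∈ Icc (0 : ℝ) (l / (1 - l)),
      {w : Fin (k * n) → Bool |
        ((Sword l (List.ofFn w) '' Icc 0 (l / (1 - l))) ∩
          ball x (l ^ ((n - 1) * k) * η)).Nonempty}.ncard ≤ 2 ^ n)
    {x r : ℝ} (hx : x ∈ Icc 0 (l / (1 - l))) (hr : 0 < r) :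
    ν (ball x r) ≤ ENNReal.ofReal ((r / η) ^ ((k - 1) * log 2 / (k * |log l|))) := by
  have hd : 0 ≤ (k - 1) * log 2 / (k * |log l|) := by
    have : (1 : ℝ) ≤ k := by exact_mod_cast hk
    exact div_nonneg (mul_nonneg (by linarith) (log_nonneg one_le_two)) (by positivity)
  rcases le_or_gt r η with hrη | hηr
  · obtain ⟨m, hm, hrm⟩ := exists_pow_succ_mul_lt_le_pow_mul (pow_pos hl0 k)
      (pow_lt_one₀ hl0.le hl1 hk.ne') hr hrη
    rw [← pow_mul, mul_comm k] at hm hrm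
    calc ν (ball x r) ≤ ν (ball x (l ^ ((m + 1 - 1) * k) * η)) := by
          gcongr; simpa using hrm
      _ ≤ {w : Fin (k * (m + 1)) → Bool | ((Sword l (List.ofFn w) '' Icc 0 (l / (1 - l))) ∩
            ball x (l ^ ((m + 1 - 1) * k) * η)).Nonempty}.ncard * 2⁻¹ ^ (k * (m + 1)) :=
          measure_le_ncard_mul hss hsupp _ isOpen_ball.measurableSet
      _ ≤ (2 ^ (m + 1) : ℕ) * 2⁻¹ ^ (k * (m + 1)) := by
          gcongr; exact hcount (m + 1) (by omega) x hx
      _ = ENNReal.ofReal ((l ^ ((m + 1) * k)) ^ ((k - 1) * log 2 / (k * |log l|))) := by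
          rw [← two_pow_mul_two_inv_pow_eq_rpow hl0 hl1 hk.ne',
            ENNReal.ofReal_mul (by positivity), ENNReal.ofReal_pow (by norm_num),
            ENNReal.ofReal_pow (by norm_num)]
          simp
      _ ≤ ENNReal.ofReal ((r / η) ^ ((k - 1) * log 2 / (k * |log l|))) := by
          gcongr; rw [le_div_iff₀ hη]; exact hm.le
  · calc ν (ball x r) ≤ 1 := prob_le_one
      _ ≤ _ := ENNReal.one_le_ofReal.2 (one_le_rpow ((one_le_div hη).2 hηr.le) hd)

end Dimension

theorem stmt15_general (l : ℝ) (k : ℕ) (hk : 2 ≤ k) (hl0 : 1 / 2 < l) (hl1 : l < 1)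
    (η : ℝ) (hη : 0 < η)
    (hcount : ∀ n : ℕ, 1 ≤ n → ∀ x ∈ Set.Icc (0 : ℝ) (l / (1 - l)),
      {w : Fin (k * n) → Bool |
        ((Sword l (List.ofFn w) '' Set.Icc 0 (l / (1 - l))) ∩
          Metric.ball x (l ^ ((n - 1) * k) * η)).Nonempty}.ncard ≤ 2 ^ n)
    (ν : Measure ℝ) [IsProbabilityMeasure ν]
    (hss : ν = ENNReal.ofReal (1 / 2) • ν.map (Smap l false) +
      ENNReal.ofReal (1 / 2) • ν.map (Smap l true))
    (hsupp : ν (Set.Icc 0 (l / (1 - l)))ᶜ = 0) :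
    (∀ x ∈ Set.Icc (0 : ℝ) (l / (1 - l)),
      (k - 1 : ℝ) * Real.log 2 / (k * |Real.log l|) ≤
        Filter.liminf (fun r : ℝ => Real.log (ν (Metric.ball x r)).toReal / Real.log r)
          (nhdsWithin 0 (Set.Ioi 0))) ∧
    ∃ C δ : ℝ, 0 < C ∧ 0 < δ ∧ ∀ a b : ℝ, a ≤ b →
      Set.Icc a b ⊆ Set.Icc (0 : ℝ) (l / (1 - l)) →
        ν (Set.Icc a b) ≤ ENNReal.ofReal (C * (b - a) ^ δ) := by
  have hl : 0 < l := by linarith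
  have h1l : 0 < 1 - l := by linarith
  set d := (k - 1 : ℝ) * log 2 / (k * |log l|)
  have hd : 0 < d := by
    have : (2 : ℝ) ≤ k := by exact_mod_cast hk
    have hlog : 0 < |log l| := abs_pos.2 (log_neg hl hl1).ne
    exact div_pos (mul_pos (by linarith) (log_pos one_lt_two)) (mul_pos (by linarith) hlog)
  have hC : 0 < η ^ (-d) := rpow_pos_of_pos hη _
  have hup : ∀ x ∈ Icc (0 : ℝ) (l / (1 - l)), ∀ r > 0,
      ν (ball x r) ≤ ENNReal.ofReal (η ^ (-d) * r ^ d) := fun x hx r hr => by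
    rw [rpow_neg hη.le, ← div_eq_inv_mul, ← div_rpow hr.le hη.le]
    exact measure_ball_le_rpow hss hsupp (by omega) hl hl1 hη hcount hx hr
  refine ⟨fun x hx => ?_, η ^ (-d), d, hC, hd, fun a b hab hsub =>
    measure_Icc_le_of_forall_ball hC.le hd.le hab (hup _ (hsub ⟨by linarith, by linarith⟩))⟩
  refine le_liminf_log_measure_div_log (s := fun r => ball x r)
    (c := (1 - l) ^ (log 2 / |log l|)) (e := log 2 / |log l|) (rpow_pos_of_pos h1l _) hC ?_
  filter_upwards [Ioc_mem_nhdsGT (div_pos hl h1l)] with r ⟨hr0, hrL⟩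
  refine ⟨?_, hup x hx r hr0⟩
  rw [← mul_rpow h1l.le hr0.le]
  exact ofReal_rpow_le_measure_ball hss hsupp hl0.le hl1 hx hr0 hrL

theorem stmt15 (l : ℝ) (k : ℕ) (hk : 2 ≤ k) (hl0 : 1 / 2 < l) (hl1 : l < 1)
    (hΛ : 2 * l - 1 < l ^ (k - 1) * (1 - l))
    (η : ℝ) (hη : 0 < η)
    (hcount : ∀ n : ℕ, 1 ≤ n → ∀ x ∈ Set.Icc (0 : ℝ) (l / (1 - l)),
      {w : Fin (k * n) → Bool |
        ((Sword l (List.ofFn w) '' Set.Icc 0 (l / (1 - l))) ∩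
          Metric.ball x (l ^ ((n - 1) * k) * η)).Nonempty}.ncard ≤ 2 ^ n)
    (ν : Measure ℝ) [IsProbabilityMeasure ν]
    (hss : ν = ENNReal.ofReal (1 / 2) • ν.map (Smap l false) +
      ENNReal.ofReal (1 / 2) • ν.map (Smap l true))
    (hsupp : ν (Set.Icc 0 (l / (1 - l)))ᶜ = 0) :
    (∀ x ∈ Set.Icc (0 : ℝ) (l / (1 - l)),
      (k - 1 : ℝ) * Real.log 2 / (k * |Real.log l|) ≤
        Filter.liminf (fun r : ℝ => Real.log (ν (Metric.ball x r)).toReal / Real.log r)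
          (nhdsWithin 0 (Set.Ioi 0))) ∧
    ∃ C δ : ℝ, 0 < C ∧ 0 < δ ∧ ∀ a b : ℝ, a ≤ b →
      Set.Icc a b ⊆ Set.Icc (0 : ℝ) (l / (1 - l)) →
        ν (Set.Icc a b) ≤ ENNReal.ofReal (C * (b - a) ^ δ) :=
  stmt15_general l k hk hl0 hl1 η hη hcount ν hss hsupp
end
end

section
/- Let ν and μ be finite Borel measures on a compact interval I ⊆ ℝ, and suppose there exist constants C₁, C₂ > 0 and exponents δ₁, δ₂ > 1/2 such that μ(J) ≤ C₁|J|^{δ₁} and ν(J) ≤ C₂|J|^{δ₂} for every subinterval J ⊆ I. Then there exists C₃ > 0 such that the convolution ν*μ satisfies (ν*μ)(J₁) ≤ C₃|J₁|^{δ₁+δ₂−1} for every interval J₁ ⊆ I + I. -/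
/-!
Writing `(ν ∗ μ)(J) = ∫ μ(J - x) dν(x)`, every fibre has `μ`-mass at most `C₁ |J|^δ₁` and only
`x ∈ J - I` contribute. The interval `J - I` is covered by `O(|I| / |J|)` intervals of length
`|J|`, each of `ν`-mass at most `C₂ |J|^δ₂`; multiplying gives `O(|I| |J|^(δ₁ + δ₂ - 1))`.
-/

open MeasureTheory Pointwise ENNReal Set

noncomputable section

lemma conv_apply_le_mul_measure {G : Type*} [AddMonoid G] [MeasurableSpace G] [MeasurableAdd₂ G]
    {ν μ : Measure G} [SFinite μ] {A S : Set G} (hA : MeasurableSet A) (hS : MeasurableSet S)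
    {M : ℝ≥0∞} (hM : ∀ x, μ ((x + ·) ⁻¹' A) ≤ M) (hSc : ∀ x ∉ S, μ ((x + ·) ⁻¹' A) = 0) :
    (ν ∗ μ) A ≤ M * ν S := by
  rw [Measure.conv, Measure.map_apply measurable_add hA, Measure.prod_apply (measurable_add hA),
    ← lintegral_indicator_const hS]
  refine lintegral_mono fun x => ?_
  by_cases hx : x ∈ S
  · rw [indicator_of_mem hx]
    exact hM x
  · rw [indicator_of_notMem hx]
    exact (hSc x hx).le

section HolderBound

variable {a b C δ : ℝ} {μ : Measure ℝ}

lemma measure_Icc_le_of_sub_le (hμs : μ (Icc a b)ᶜ = 0) (hC : 0 ≤ C) (hδ : 0 ≤ δ)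
    (hμ : ∀ c d : ℝ, c ≤ d → Icc c d ⊆ Icc a b → μ (Icc c d) ≤ ENNReal.ofReal (C * (d - c) ^ δ))
    {s t L : ℝ} (h : t - s ≤ L) :
    μ (Icc s t) ≤ ENNReal.ofReal (C * L ^ δ) := by
  rw [← measure_inter_conull hμs, Icc_inter_Icc]
  rcases le_or_gt (s ⊔ a) (t ⊓ b) with hle | hlt
  · refine (hμ _ _ hle (Icc_subset_Icc le_sup_right inf_le_right)).trans ?_
    gcongr
    linarith [le_max_left s a, min_le_left t b]
  · simp [Icc_eq_empty_of_lt hlt]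

lemma conv_Icc_le_mul_measure_Icc [SFinite μ] (hμs : μ (Icc a b)ᶜ = 0) (hC : 0 ≤ C) (hδ : 0 ≤ δ)
    (hμ : ∀ c d : ℝ, c ≤ d → Icc c d ⊆ Icc a b → μ (Icc c d) ≤ ENNReal.ofReal (C * (d - c) ^ δ))
    (ν : Measure ℝ) (c d : ℝ) :
    (ν ∗ μ) (Icc c d) ≤ ENNReal.ofReal (C * (d - c) ^ δ) * ν (Icc (c - b) (d - a)) := by
  refine conv_apply_le_mul_measure measurableSet_Icc measurableSet_Icc (fun x => ?_)
    (fun x hx => ?_) <;> rw [preimage_const_add_Icc]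
  · exact measure_Icc_le_of_sub_le hμs hC hδ hμ (by linarith)
  · refine measure_mono_null (fun y hy (hyab : y ∈ Icc a b) => hx ?_) hμs
    exact ⟨by linarith [hy.1, hyab.2], by linarith [hy.2, hyab.1]⟩

end HolderBound

section Covering

variable {ν : Measure ℝ} {B : ℝ≥0∞} {ℓ : ℝ}

lemma measure_Icc_add_nat_mul_le (hB : ∀ s, ν (Icc s (s + ℓ)) ≤ B) (n : ℕ) (t : ℝ) :
    ν (Icc t (t + (n + 1) * ℓ)) ≤ (n + 1) * B := by
  induction n with
  | zero => simpa using hB t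
  | succ n ih =>
    have hsplit : Icc t (t + (n + 1 + 1) * ℓ) ⊆
        Icc t (t + (n + 1) * ℓ) ∪ Icc (t + (n + 1) * ℓ) (t + (n + 1) * ℓ + ℓ) := by
      rw [show t + (n + 1 + 1) * ℓ = t + (n + 1) * ℓ + ℓ by ring]
      exact Icc_subset_Icc_union_Icc
    calc ν (Icc t (t + ((n + 1 : ℕ) + 1 : ℝ) * ℓ))
        ≤ ν (Icc t (t + (n + 1) * ℓ)) + ν (Icc (t + (n + 1) * ℓ) (t + (n + 1) * ℓ + ℓ)) := by
          push_cast
          exact (measure_mono hsplit).trans (measure_union_le _ _)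
      _ ≤ (n + 1) * B + B := add_le_add ih (hB _)
      _ = ((n + 1 : ℕ) + 1) * B := by push_cast; ring

lemma measure_Icc_le_of_forall_Icc_le (hℓ : 0 < ℓ) (hB : ∀ s, ν (Icc s (s + ℓ)) ≤ B)
    {s t : ℝ} (hst : s ≤ t) :
    ν (Icc s t) ≤ ENNReal.ofReal ((t - s) / ℓ + 2) * B := by
  set n := ⌈(t - s) / ℓ⌉₊
  have hn : (t - s) / ℓ ≤ n := Nat.le_ceil _
  have hn' : (n : ℝ) < (t - s) / ℓ + 1 := Nat.ceil_lt_add_one (by positivity)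
  have hcover : Icc s t ⊆ Icc s (s + (n + 1) * ℓ) := by
    refine Icc_subset_Icc le_rfl ?_
    have := (div_le_iff₀ hℓ).mp hn
    nlinarith
  calc ν (Icc s t) ≤ (n + 1) * B :=
        (measure_mono hcover).trans (measure_Icc_add_nat_mul_le hB n s)
    _ ≤ ENNReal.ofReal ((t - s) / ℓ + 2) * B := by
      gcongr
      rw [← ENNReal.ofReal_natCast, ← ENNReal.ofReal_one,
        ← ENNReal.ofReal_add (by positivity) zero_le_one]
      exact ENNReal.ofReal_le_ofReal (by linarith)

end Covering

lemma sub_le_two_mul_sub_of_Icc_subset_add {a b c d : ℝ} (hab : a ≤ b) (hcd : c ≤ d)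
    (h : Icc c d ⊆ Icc a b + Icc a b) : d - c ≤ 2 * (b - a) := by
  rw [Set.Icc_add_Icc hab hab, Icc_subset_Icc_iff hcd] at h
  linarith [h.1, h.2]

lemma covering_count_mul_rpow_le {C δ L ℓ w : ℝ} (hC : 0 ≤ C) (hℓ : 0 < ℓ) (hℓL : ℓ ≤ 2 * L)
    (hw : w ≤ ℓ + L) :
    (w / ℓ + 2) * (C * ℓ ^ δ) ≤ C * (7 * L + 1) * ℓ ^ (δ - 1) := by
  have hpow : ℓ ^ δ = ℓ ^ (δ - 1) * ℓ := by
    rw [← Real.rpow_add_one hℓ.ne', sub_add_cancel]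
  calc (w / ℓ + 2) * (C * ℓ ^ δ) = C * (w + 2 * ℓ) * ℓ ^ (δ - 1) := by
        rw [hpow]
        field_simp
    _ ≤ C * (7 * L + 1) * ℓ ^ (δ - 1) := by
        gcongr C * ?_ * _
        linarith

theorem stmt16_general (a b : ℝ) (hab : a ≤ b)
    (μ ν : Measure ℝ) [IsFiniteMeasure μ]
    (hμs : μ (Set.Icc a b)ᶜ = 0) (hνs : ν (Set.Icc a b)ᶜ = 0)
    (C₁ C₂ δ₁ δ₂ : ℝ) (hC₁ : 0 < C₁) (hC₂ : 0 < C₂)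
    (hδ₁ : 1 / 2 < δ₁) (hδ₂ : 1 / 2 < δ₂)
    (hμ : ∀ c d : ℝ, c ≤ d → Set.Icc c d ⊆ Set.Icc a b →
      μ (Set.Icc c d) ≤ ENNReal.ofReal (C₁ * (d - c) ^ δ₁))
    (hν : ∀ c d : ℝ, c ≤ d → Set.Icc c d ⊆ Set.Icc a b →
      ν (Set.Icc c d) ≤ ENNReal.ofReal (C₂ * (d - c) ^ δ₂)) :
    ∃ C₃ : ℝ, 0 < C₃ ∧ ∀ c d : ℝ, c ≤ d →
      Set.Icc c d ⊆ Set.Icc a b + Set.Icc a b →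
        (ν.prod μ).map (fun p : ℝ × ℝ => p.1 + p.2) (Set.Icc c d) ≤
          ENNReal.ofReal (C₃ * (d - c) ^ (δ₁ + δ₂ - 1)) := by
  refine ⟨C₁ * C₂ * (7 * (b - a) + 1), by positivity, fun c d hcd hsub => ?_⟩
  change (ν ∗ μ) (Icc c d) ≤ _
  have hconv := conv_Icc_le_mul_measure_Icc hμs hC₁.le (by linarith) hμ ν c d
  rcases hcd.eq_or_lt with rfl | hlt
  · refine hconv.trans ?_
    simp [Real.zero_rpow (by linarith : δ₁ ≠ 0)]
  have hℓ : 0 < d - c := sub_pos.2 hlt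
  have hcover := measure_Icc_le_of_forall_Icc_le hℓ
    (fun s => measure_Icc_le_of_sub_le hνs hC₂.le (by linarith) hν (L := d - c) (by linarith))
    (show c - b ≤ d - a by linarith)
  set k := (d - a - (c - b)) / (d - c) + 2
  have hk : 0 ≤ k := by have := div_nonneg (by linarith : 0 ≤ d - a - (c - b)) hℓ.le; linarith
  calc (ν ∗ μ) (Icc c d)
      ≤ ENNReal.ofReal (C₁ * (d - c) ^ δ₁) *
          (ENNReal.ofReal k * ENNReal.ofReal (C₂ * (d - c) ^ δ₂)) := hconv.trans (by gcongr)
    _ = ENNReal.ofReal (k * (C₁ * C₂ * (d - c) ^ (δ₁ + δ₂))) := by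
        rw [← ENNReal.ofReal_mul hk, ← ENNReal.ofReal_mul (by positivity), Real.rpow_add hℓ]
        congr 1
        ring
    _ ≤ _ := ENNReal.ofReal_le_ofReal <| covering_count_mul_rpow_le (by positivity) hℓ
        (sub_le_two_mul_sub_of_Icc_subset_add hab hcd hsub) (by linarith)

theorem stmt16 (a b : ℝ) (hab : a ≤ b)
    (μ ν : Measure ℝ) [IsFiniteMeasure μ] [IsFiniteMeasure ν]
    (hμs : μ (Set.Icc a b)ᶜ = 0) (hνs : ν (Set.Icc a b)ᶜ = 0)
    (C₁ C₂ δ₁ δ₂ : ℝ) (hC₁ : 0 < C₁) (hC₂ : 0 < C₂)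
    (hδ₁ : 1 / 2 < δ₁) (hδ₂ : 1 / 2 < δ₂)
    (hμ : ∀ c d : ℝ, c ≤ d → Set.Icc c d ⊆ Set.Icc a b →
      μ (Set.Icc c d) ≤ ENNReal.ofReal (C₁ * (d - c) ^ δ₁))
    (hν : ∀ c d : ℝ, c ≤ d → Set.Icc c d ⊆ Set.Icc a b →
      ν (Set.Icc c d) ≤ ENNReal.ofReal (C₂ * (d - c) ^ δ₂)) :
    ∃ C₃ : ℝ, 0 < C₃ ∧ ∀ c d : ℝ, c ≤ d →
      Set.Icc c d ⊆ Set.Icc a b + Set.Icc a b →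
        (ν.prod μ).map (fun p : ℝ × ℝ => p.1 + p.2) (Set.Icc c d) ≤
          ENNReal.ofReal (C₃ * (d - c) ^ (δ₁ + δ₂ - 1)) :=
  stmt16_general a b hab μ ν hμs hνs C₁ C₂ δ₁ δ₂ hC₁ hC₂ hδ₁ hδ₂ hμ hν
end
end

section
/- Let λ = g_k be the multinacci number in (1/2,1), i.e. the root of 1 = Σ_{i=1}^k λ^i, and let 1/2 < μ < g_k. Then every sequence i ∈ {0,1}^ℕ containing neither k consecutive 0's nor k consecutive 1's is the unique expansion of Π_μ(i) = Σ_{n≥1} i_n μ^n in base μ with digits {0,1}. -/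
noncomputable section

/-!
If two binary sequences `i ≠ j` have the same value, cancel their common prefix: the digits at
the first difference differ by one, so the values of the tails after it differ by exactly `1`.
A sequence with no run of `k` zeros has a nonzero digit in each block of length `k`, so its value
is at least `μ^k + μ^(2k) + ⋯ = μ^k/(1-μ^k)`; with no run of `k` ones it is at most `μ/(1-μ)`
minus that amount. For `μ < g_k` we have `μ + ⋯ + μ^k < 1`, i.e.
`μ/(1-μ) < 1 + μ^k/(1-μ^k)`, which leaves no room for a shift by `1`.
-/

theorem tsum_pow_succ_of_lt_one {r : ℝ} (h₀ : 0 ≤ r) (h₁ : r < 1) :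
    ∑' n : ℕ, r ^ (n + 1) = r / (1 - r) := by
  simp_rw [pow_succ]
  rw [tsum_mul_right, tsum_geometric_of_lt_one h₀ h₁, inv_mul_eq_div]

section BinaryExpansion

variable {μ : ℝ}

theorem summable_piL_s19 (hμ₀ : 0 ≤ μ) (hμ₁ : μ < 1) {x : ℕ → ℕ} (hx : binSeq x) :
    Summable fun n => (x n : ℝ) * μ ^ (n + 1) := by
  refine Summable.of_nonneg_of_le (fun n => by positivity) (fun n => ?_)
    ((summable_geometric_of_lt_one hμ₀ hμ₁).mul_right μ)
  rw [← pow_succ]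
  exact mul_le_of_le_one_left (by positivity) (by exact_mod_cast hx n)

theorem piL_nonneg_s19 (hμ₀ : 0 ≤ μ) (x : ℕ → ℕ) : 0 ≤ piL μ x :=
  tsum_nonneg fun n => by positivity

theorem piL_add_piL_one_sub (hμ₀ : 0 ≤ μ) (hμ₁ : μ < 1) {x : ℕ → ℕ} (hx : binSeq x) :
    piL μ x + piL μ (fun n => 1 - x n) = μ / (1 - μ) := by
  have hx' : binSeq fun n => 1 - x n := fun n => Nat.sub_le 1 (x n)
  rw [piL, piL, ← (summable_piL_s19 hμ₀ hμ₁ hx).tsum_add (summable_piL_s19 hμ₀ hμ₁ hx'),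
    ← tsum_pow_succ_of_lt_one hμ₀ hμ₁]
  congr 1 with n
  rw [← add_mul, Nat.cast_sub (hx n), add_sub_cancel, Nat.cast_one, one_mul]

theorem piL_le_s19 (hμ₀ : 0 ≤ μ) (hμ₁ : μ < 1) {x : ℕ → ℕ} (hx : binSeq x) :
    piL μ x ≤ μ / (1 - μ) := by
  rw [← piL_add_piL_one_sub hμ₀ hμ₁ hx]
  exact le_add_of_nonneg_right (piL_nonneg_s19 hμ₀ _)

theorem piL_eq_mul_head_add_tail (hμ₀ : 0 ≤ μ) (hμ₁ : μ < 1) {x : ℕ → ℕ} (hx : binSeq x) :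
    piL μ x = μ * (x 0 + piL μ (fun n => x (n + 1))) := by
  rw [piL, (summable_piL_s19 hμ₀ hμ₁ hx).tsum_eq_zero_add, piL, mul_add, ← tsum_mul_left]
  congr 1
  · ring
  · congr 1 with n
    ring

theorem pow_div_one_sub_pow_le_piL (hμ₀ : 0 < μ) (hμ₁ : μ < 1) {k : ℕ} (hk : k ≠ 0)
    {x : ℕ → ℕ} (hx : binSeq x) (hrun : ∀ s, ∃ m < k, x (s + m) ≠ 0) :
    μ ^ k / (1 - μ ^ k) ≤ piL μ x := by
  choose g hgk hg using fun t => hrun (t * k)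
  have hμk₀ : 0 ≤ μ ^ k := by positivity
  have hμk₁ : μ ^ k < 1 := pow_lt_one₀ hμ₀.le hμ₁ hk
  have hpow : ∀ t : ℕ, (μ ^ k) ^ (t + 1) = μ ^ (k * (t + 1)) := fun t => (pow_mul μ k _).symm
  rw [← tsum_pow_succ_of_lt_one hμk₀ hμk₁]
  refine Summable.tsum_le_tsum_of_inj (fun t => t * k + g t) ?inj (fun _ _ => by positivity)
    (fun t => ?le) ((summable_geometric_of_lt_one hμk₀ hμk₁).mul_right _ |>.congr
      fun t => (pow_succ _ t).symm) (summable_piL_s19 hμ₀.le hμ₁ hx)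
  case inj =>
    exact (strictMono_nat_of_lt_succ fun t => by nlinarith [hgk t]).injective
  case le =>
    have hxt : (1 : ℝ) ≤ x (t * k + g t) := by exact_mod_cast Nat.one_le_iff_ne_zero.mpr (hg t)
    rw [hpow]
    refine le_trans ?_ (le_mul_of_one_le_left (by positivity) hxt)
    exact pow_le_pow_of_le_one hμ₀.le hμ₁.le (by nlinarith [hgk t])

end BinaryExpansion

theorem div_one_sub_lt_one_add_pow_div {g μ : ℝ} {k : ℕ} (hk : k ≠ 0) (hμ₀ : 0 ≤ μ)
    (hμg : μ < g) (hg₁ : g < 1) (hroot : ∑ m ∈ Finset.range k, g ^ (m + 1) = 1) :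
    μ / (1 - μ) < 1 + μ ^ k / (1 - μ ^ k) := by
  have hμ₁ : μ < 1 := hμg.trans hg₁
  have hμk : μ ^ k < 1 := pow_lt_one₀ hμ₀ hμ₁ hk
  have hsum : μ * ∑ m ∈ Finset.range k, μ ^ m < 1 := by
    rw [← hroot, Finset.mul_sum]
    refine Finset.sum_lt_sum_of_nonempty (Finset.nonempty_range_iff.mpr hk) fun m _ => ?_
    rw [← pow_succ']
    exact pow_lt_pow_left₀ hμg hμ₀ m.succ_ne_zero
  have hcross : μ * (1 - μ ^ k) < 1 - μ := by
    linear_combination (1 - μ) * hsum + μ * geom_sum_mul μ k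
  rw [one_add_div (sub_pos.mpr hμk).ne', sub_add_cancel,
    div_lt_div_iff₀ (sub_pos.mpr hμ₁) (sub_pos.mpr hμk)]
  linarith

section UniqueExpansion

variable {μ : ℝ} {k : ℕ} {i j : ℕ → ℕ}

theorem tail_window_ne {c : ℕ} (h : ∀ s, ∃ m < k, i (s + m) ≠ c) (s : ℕ) :
    ∃ m < k, i (s + m + 1) ≠ c := by
  simpa only [add_right_comm] using h (s + 1)

theorem head_eq_of_piL_eq (hμ₀ : 0 < μ) (hμ₁ : μ < 1) (hk : k ≠ 0)
    (hkey : μ / (1 - μ) < 1 + μ ^ k / (1 - μ ^ k)) (hi : binSeq i) (hj : binSeq j)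
    (h0 : ∀ s, ∃ m < k, i (s + m) ≠ 0) (h1 : ∀ s, ∃ m < k, i (s + m) ≠ 1)
    (h : piL μ j = piL μ i) : j 0 = i 0 := by
  have hi' : binSeq fun n => i (n + 1) := fun n => hi _
  have htail : (j 0 : ℝ) + piL μ (fun n => j (n + 1)) = i 0 + piL μ (fun n => i (n + 1)) := by
    rw [piL_eq_mul_head_add_tail hμ₀.le hμ₁ hi, piL_eq_mul_head_add_tail hμ₀.le hμ₁ hj] at h
    exact mul_left_cancel₀ hμ₀.ne' h
  have hlow : μ ^ k / (1 - μ ^ k) ≤ piL μ (fun n => i (n + 1)) :=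
    pow_div_one_sub_pow_le_piL hμ₀ hμ₁ hk hi' (tail_window_ne h0)
  have hhigh : piL μ (fun n => i (n + 1)) + μ ^ k / (1 - μ ^ k) ≤ μ / (1 - μ) := by
    rw [← piL_add_piL_one_sub hμ₀.le hμ₁ hi']
    refine add_le_add le_rfl (pow_div_one_sub_pow_le_piL hμ₀ hμ₁ hk
      (fun n => Nat.sub_le 1 _) fun s => ?_)
    obtain ⟨m, hm, hne⟩ := tail_window_ne h1 s
    exact ⟨m, hm, by have := hi (s + m + 1); omega⟩
  have hj_le := piL_le_s19 hμ₀.le hμ₁ fun n => hj (n + 1)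
  have hj_nonneg := piL_nonneg_s19 hμ₀.le fun n => j (n + 1)
  rcases Nat.le_one_iff_eq_zero_or_eq_one.mp (hi 0) with hi0 | hi0 <;>
  rcases Nat.le_one_iff_eq_zero_or_eq_one.mp (hj 0) with hj0 | hj0 <;>
  simp only [hi0, hj0, Nat.cast_zero, Nat.cast_one] at htail ⊢ <;> linarith

theorem eq_of_piL_eq (hμ₀ : 0 < μ) (hμ₁ : μ < 1) (hk : k ≠ 0)
    (hkey : μ / (1 - μ) < 1 + μ ^ k / (1 - μ ^ k)) (hi : binSeq i) (hj : binSeq j)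
    (h0 : ∀ s, ∃ m < k, i (s + m) ≠ 0) (h1 : ∀ s, ∃ m < k, i (s + m) ≠ 1)
    (h : piL μ j = piL μ i) : j = i := by
  funext n
  induction n generalizing i j with
  | zero => exact head_eq_of_piL_eq hμ₀ hμ₁ hk hkey hi hj h0 h1 h
  | succ n ih =>
    have hhead := head_eq_of_piL_eq hμ₀ hμ₁ hk hkey hi hj h0 h1 h
    rw [piL_eq_mul_head_add_tail hμ₀.le hμ₁ hi, piL_eq_mul_head_add_tail hμ₀.le hμ₁ hj,
      hhead] at h
    exact ih (i := fun m => i (m + 1)) (j := fun m => j (m + 1)) (fun m => hi _)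
      (fun m => hj _) (tail_window_ne h0) (tail_window_ne h1)
      (add_left_cancel (mul_left_cancel₀ hμ₀.ne' h))

end UniqueExpansion

theorem stmt19_general (k : ℕ) (hk : 2 ≤ k) (gk : ℝ) (hgk1 : gk < 1)
    (hroot : ∑ m ∈ Finset.range k, gk ^ (m + 1) = 1)
    (μ : ℝ) (hμ0 : 1 / 2 < μ) (hμ1 : μ < gk)
    (i : ℕ → ℕ) (hib : binSeq i)
    (h0 : ¬ ∃ n : ℕ, ∀ m < k, i (n + m) = 0)
    (h1 : ¬ ∃ n : ℕ, ∀ m < k, i (n + m) = 1) :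
    ∀ j : ℕ → ℕ, binSeq j → piL μ j = piL μ i → j = i := by
  have hμpos : 0 < μ := by linarith
  have hk0 : k ≠ 0 := by omega
  push Not at h0 h1
  exact fun j hjb h => eq_of_piL_eq hμpos (hμ1.trans hgk1) hk0
    (div_one_sub_lt_one_add_pow_div hk0 hμpos.le hμ1 hgk1 hroot) hib hjb h0 h1 h

theorem stmt19 (k : ℕ) (hk : 2 ≤ k) (gk : ℝ) (hgk0 : 1 / 2 < gk) (hgk1 : gk < 1)
    (hroot : ∑ m ∈ Finset.range k, gk ^ (m + 1) = 1)
    (μ : ℝ) (hμ0 : 1 / 2 < μ) (hμ1 : μ < gk)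
    (i : ℕ → ℕ) (hib : binSeq i)
    (h0 : ¬ ∃ n : ℕ, ∀ m < k, i (n + m) = 0)
    (h1 : ¬ ∃ n : ℕ, ∀ m < k, i (n + m) = 1) :
    ∀ j : ℕ → ℕ, binSeq j → piL μ j = piL μ i → j = i :=
  stmt19_general k hk gk hgk1 hroot μ hμ0 hμ1 i hib h0 h1
end
end
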